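/- arXiv:0802.2856 — 5 statements merged into one kernel-verified Lean document; each statement's English description precedes it below -/
import Mathlib

section
/- If f is an MSP with n variables and the i-th component of the n-th Kleene iterate κ^(n) = f^n(0) is zero, then the i-th component of κ^(k) is zero for all k ∈ ℕ. -/
open MvPolynomial

noncomputable def mspEval {n : ℕ} (F : Fin n → MvPolynomial (Fin n) ℝ)
    (x : Fin n → ℝ) : Fin n → ℝ :=
  fun i => eval x (F i)

def mspNonneg {n : ℕ} (F : Fin n → MvPolynomial (Fin n) ℝ) : Prop :=
  ∀ i m, 0 ≤ coeff m (F i)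

noncomputable def kleeneSeq {n : ℕ} (F : Fin n → MvPolynomial (Fin n) ℝ) (k : ℕ) :
    Fin n → ℝ :=
  (mspEval F)^[k] 0

section Aux

variable {n : ℕ}

lemma aux_eval_nonneg (p : MvPolynomial (Fin n) ℝ) (hp : ∀ m, 0 ≤ coeff m p)
    (x : Fin n → ℝ) (hx : ∀ j, 0 ≤ x j) : 0 ≤ eval x p := by
  rw [eval_eq]
  exact Finset.sum_nonneg fun m _ =>
    mul_nonneg (hp m) (Finset.prod_nonneg fun j _ => pow_nonneg (hx j) _)

lemma aux_eval_mono (p : MvPolynomial (Fin n) ℝ) (hp : ∀ m, 0 ≤ coeff m p)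
    (x y : Fin n → ℝ) (hx : ∀ j, 0 ≤ x j) (hxy : ∀ j, x j ≤ y j) :
    eval x p ≤ eval y p := by
  rw [eval_eq, eval_eq]
  refine Finset.sum_le_sum fun m _ => ?_
  refine mul_le_mul_of_nonneg_left ?_ (hp m)
  refine Finset.prod_le_prod (fun j _ => pow_nonneg (hx j) _) fun j _ => ?_
  exact pow_le_pow_left₀ (hx j) (hxy j) _

lemma aux_eval_zero_iff (p : MvPolynomial (Fin n) ℝ) (hp : ∀ m, 0 ≤ coeff m p)
    (x : Fin n → ℝ) (hx : ∀ j, 0 ≤ x j) :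
    eval x p = 0 ↔ ∀ m ∈ p.support, ∃ j ∈ m.support, x j = 0 := by
  rw [eval_eq]
  rw [Finset.sum_eq_zero_iff_of_nonneg (fun m _ =>
    mul_nonneg (hp m) (Finset.prod_nonneg fun j _ => pow_nonneg (hx j) _))]
  refine forall_congr' fun m => imp_congr_right fun hm => ?_
  rw [mul_eq_zero]
  constructor
  · rintro (h | h)
    · exact absurd h (mem_support_iff.mp hm)
    · rcases Finset.prod_eq_zero_iff.mp h with ⟨j, hj, hj0⟩
      exact ⟨j, hj, (pow_eq_zero_iff (Finsupp.mem_support_iff.mp hj)).mp hj0⟩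
  · rintro ⟨j, hj, hj0⟩
    exact Or.inr (Finset.prod_eq_zero hj
      (by rw [hj0]; exact zero_pow (Finsupp.mem_support_iff.mp hj)))

variable (F : Fin n → MvPolynomial (Fin n) ℝ)

lemma kleene_succ (k : ℕ) : kleeneSeq F (k + 1) = mspEval F (kleeneSeq F k) := by
  simp [kleeneSeq, Function.iterate_succ_apply']

lemma kleene_nonneg (hF : mspNonneg F) : ∀ (k : ℕ) (j : Fin n), 0 ≤ kleeneSeq F k j := by
  intro k
  induction k with
  | zero => intro j; simp [kleeneSeq]
  | succ k ih =>
    intro j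
    rw [kleene_succ]
    exact aux_eval_nonneg _ (hF j) _ ih

lemma kleene_mono (hF : mspNonneg F) : ∀ k j, kleeneSeq F k j ≤ kleeneSeq F (k + 1) j := by
  intro k
  induction k with
  | zero => intro j; simpa [kleeneSeq] using kleene_nonneg F hF 1 j
  | succ k ih =>
    intro j
    rw [kleene_succ, kleene_succ]
    exact aux_eval_mono _ (hF j) _ _ (kleene_nonneg F hF k) ih

lemma kleene_mono' (hF : mspNonneg F) {k l : ℕ} (hkl : k ≤ l) (j : Fin n) :
    kleeneSeq F k j ≤ kleeneSeq F l j := by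
  induction l with
  | zero => simp_all
  | succ l ih =>
    rcases Nat.lt_or_ge k (l + 1) with hk | hk
    · exact le_trans (ih (Nat.lt_succ_iff.mp hk)) (kleene_mono F hF l j)
    · have : k = l + 1 := le_antisymm hkl hk
      simp [this]

/-- zero-ness of the next iterate depends only on the zero set of the current one -/
lemma kleene_det (hF : mspNonneg F) {a b : ℕ} (hab : ∀ j, kleeneSeq F a j = 0 ↔ kleeneSeq F b j = 0) :
    ∀ j, kleeneSeq F (a + 1) j = 0 ↔ kleeneSeq F (b + 1) j = 0 := by
  intro j
  rw [kleene_succ, kleene_succ]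
  show eval _ (F j) = 0 ↔ eval _ (F j) = 0
  rw [aux_eval_zero_iff _ (hF j) _ (kleene_nonneg F hF a),
    aux_eval_zero_iff _ (hF j) _ (kleene_nonneg F hF b)]
  refine forall_congr' fun m => imp_congr_right fun _ => ?_
  exact exists_congr fun l => and_congr_right fun _ => hab l

end Aux

/-- if the i-th component of the n-th Kleene iterate is zero,
then the i-th component of every Kleene iterate is zero. -/
theorem kleene_zero_stays_zero {n : ℕ} (F : Fin n → MvPolynomial (Fin n) ℝ)
    (hF : mspNonneg F) (i : Fin n)
    (h : kleeneSeq F n i = 0) :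
    ∀ k : ℕ, kleeneSeq F k i = 0 := by
  classical
  have hzero : ∀ {k l : ℕ}, k ≤ l → kleeneSeq F l i = 0 → kleeneSeq F k i = 0 := by
    intro k l hkl hl
    exact le_antisymm (hl ▸ kleene_mono' F hF hkl i) (kleene_nonneg F hF k i)
  -- zero sets as finsets
  set Z : ℕ → Finset (Fin n) := fun k => Finset.univ.filter (fun j => kleeneSeq F k j = 0)
    with hZ
  have hmem : ∀ k j, j ∈ Z k ↔ kleeneSeq F k j = 0 := by
    intro k j; simp [hZ]
  have hanti : ∀ k, Z (k + 1) ⊆ Z k := by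
    intro k j hj
    rw [hmem] at *
    exact le_antisymm (hj ▸ kleene_mono F hF k j) (kleene_nonneg F hF k j)
  -- there is a stabilization point k₀ ≤ n
  have hstab : ∃ k₀ ≤ n, Z k₀ = Z (k₀ + 1) := by
    by_contra hc
    push_neg at hc
    have hcard : ∀ k ≤ n + 1, (Z k).card + k ≤ n := by
      intro k hk
      induction k with
      | zero =>
        have := (Finset.card_filter_le Finset.univ (fun j => kleeneSeq F 0 j = 0)).trans
          (le_of_eq (Finset.card_univ.trans (Fintype.card_fin n)))
        simpa [hZ] using this
      | succ k ih =>
        have h1 : Z (k + 1) ⊂ Z k :=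
          (Finset.ssubset_iff_subset_ne.mpr ⟨hanti k, fun he => hc k (Nat.lt_succ_iff.mp hk) he.symm⟩)
        have h2 := Finset.card_lt_card h1
        have h3 := ih (Nat.le_of_succ_le hk)
        omega
    have := hcard (n + 1) le_rfl
    omega
  obtain ⟨k₀, hk₀n, hk₀⟩ := hstab
  -- the zero set is constant from k₀ on
  have hconst : ∀ m, Z (k₀ + m) = Z k₀ := by
    intro m
    induction m with
    | zero => rfl
    | succ m ih =>
      have : ∀ j, kleeneSeq F (k₀ + m) j = 0 ↔ kleeneSeq F k₀ j = 0 := by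
        intro j; rw [← hmem, ← hmem, ih]
      have hd := kleene_det F hF this
      ext j
      rw [hk₀, hmem, hmem, show k₀ + (m + 1) = (k₀ + m) + 1 from rfl]
      exact hd j
  intro k
  rcases Nat.le_total k n with hk | hk
  · exact hzero hk h
  · have h1 : i ∈ Z n := (hmem n i).mpr h
    have h2 : Z n = Z k₀ := by
      have := hconst (n - k₀); rwa [Nat.add_sub_cancel' hk₀n] at this
    have h3 : Z k = Z k₀ := by
      have := hconst (k - k₀); rwa [Nat.add_sub_cancel' (le_trans hk₀n hk)] at this
    rw [← hmem]
    rw [h3, ← h2]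
    exact h1
end

section
/- Let f be an MSP and d a cone vector of f, i.e., d ≻ 0 (strictly positive in all components) and f'(μf) d ≤ d, where f' denotes the Jacobian and μf the least fixed point. Let λmax = max_i (μf)_i / d_i. Then for every k ∈ ℕ, the Newton iterate ν^(k) satisfies μf − ν^(k) ≤ 2^{−k} λmax d (componentwise), where ν^(0) = 0 and ν^(k+1) = ν^(k) + (Id − f'(ν^(k)))^{−1}(f(ν^(k)) − ν^(k)). -/
open MvPolynomial Matrix Filter

/-- Jacobian matrix of the system, evaluated at `x`. -/
noncomputable def mspJac {n : ℕ} (F : Fin n → MvPolynomial (Fin n) ℝ)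
    (x : Fin n → ℝ) : Matrix (Fin n) (Fin n) ℝ :=
  Matrix.of fun i j => eval x (pderiv j (F i))

/-- The Newton sequence ν⁽⁰⁾ = 0, ν⁽ᵏ⁺¹⁾ = ν⁽ᵏ⁾ + (Id − f'(ν⁽ᵏ⁾))⁻¹ (f(ν⁽ᵏ⁾) − ν⁽ᵏ⁾). -/
noncomputable def newtonSeq {n : ℕ} (F : Fin n → MvPolynomial (Fin n) ℝ) :
    ℕ → Fin n → ℝ
  | 0 => 0
  | k + 1 =>
      newtonSeq F k +
        (1 - mspJac F (newtonSeq F k))⁻¹ *ᵥ (mspEval F (newtonSeq F k) - newtonSeq F k)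

lemma evalNonneg {n : ℕ} (p : MvPolynomial (Fin n) ℝ) (hp : ∀ m, 0 ≤ coeff m p)
    {x : Fin n → ℝ} (hx : 0 ≤ x) : 0 ≤ eval x p := by
  rw [eval_eq]
  refine Finset.sum_nonneg fun m _ => mul_nonneg (hp m) ?_
  exact Finset.prod_nonneg fun i _ => pow_nonneg (hx i) _

lemma evalMono {n : ℕ} (p : MvPolynomial (Fin n) ℝ) (hp : ∀ m, 0 ≤ coeff m p)
    {x y : Fin n → ℝ} (hx : 0 ≤ x) (hxy : x ≤ y) : eval x p ≤ eval y p := by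
  rw [eval_eq, eval_eq]
  refine Finset.sum_le_sum fun m _ => mul_le_mul_of_nonneg_left ?_ (hp m)
  refine Finset.prod_le_prod (fun i _ => pow_nonneg (hx i) _) fun i _ =>
    pow_le_pow_left₀ (hx i) (hxy i) _

lemma pderivNonneg {n : ℕ} (p : MvPolynomial (Fin n) ℝ) (hp : ∀ m, 0 ≤ coeff m p)
    (j : Fin n) : ∀ m, 0 ≤ coeff m (pderiv j p) := by
  intro m
  rw [p.as_sum, map_sum, MvPolynomial.coeff_sum]
  refine Finset.sum_nonneg fun v _ => ?_
  rw [pderiv_monomial, coeff_monomial]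
  split
  · exact mul_nonneg (hp v) (Nat.cast_nonneg _)
  · exact le_refl 0

lemma scalarTaylor (g : Polynomial ℝ) (hg : ∀ k, 0 ≤ g.coeff k) :
    2 * (g.eval 1 - g.eval 0) ≤ g.derivative.eval 0 + g.derivative.eval 1 := by
  conv_lhs => rw [g.as_sum_support]
  conv_rhs => rw [g.as_sum_support]
  rw [map_sum, Polynomial.eval_finset_sum, Polynomial.eval_finset_sum,
    Polynomial.eval_finset_sum, Polynomial.eval_finset_sum,
    ← Finset.sum_sub_distrib, Finset.mul_sum, ← Finset.sum_add_distrib]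
  refine Finset.sum_le_sum fun k _ => ?_
  have h := hg k
  rw [Polynomial.derivative_monomial, Polynomial.eval_monomial, Polynomial.eval_monomial,
    Polynomial.eval_monomial, Polynomial.eval_monomial]
  match k with
  | 0 => simp
  | 1 => simp; linarith
  | (m+2) =>
    rw [show m+2-1 = m+1 from rfl, zero_pow (by omega : m+2 ≠ 0),
      zero_pow (by omega : m+1 ≠ 0), one_pow, one_pow]
    push_cast
    nlinarith

noncomputable def lineP {n : ℕ} (x u : Fin n → ℝ) (p : MvPolynomial (Fin n) ℝ) : Polynomial ℝ :=
  MvPolynomial.aeval (fun j => Polynomial.C (x j) + Polynomial.C (u j) * Polynomial.X) p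

lemma lineP_add {n : ℕ} (x u : Fin n → ℝ) (p q : MvPolynomial (Fin n) ℝ) :
    lineP x u (p + q) = lineP x u p + lineP x u q := map_add _ _ _

lemma lineP_mul {n : ℕ} (x u : Fin n → ℝ) (p q : MvPolynomial (Fin n) ℝ) :
    lineP x u (p * q) = lineP x u p * lineP x u q := _root_.map_mul _ _ _

lemma lineP_C {n : ℕ} (x u : Fin n → ℝ) (a : ℝ) :
    lineP x u (C a) = Polynomial.C a := by simp [lineP]

lemma lineP_X {n : ℕ} (x u : Fin n → ℝ) (j : Fin n) :
    lineP x u (X j) = Polynomial.C (x j) + Polynomial.C (u j) * Polynomial.X := by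
  simp [lineP]

lemma lineP_eval {n : ℕ} (x u : Fin n → ℝ) (p : MvPolynomial (Fin n) ℝ) (t : ℝ) :
    (lineP x u p).eval t = eval (fun j => x j + u j * t) p := by
  induction p using MvPolynomial.induction_on with
  | C a => simp [lineP_C]
  | add p q hp hq => rw [lineP_add, Polynomial.eval_add, hp, hq, map_add]
  | mul_X p j hp => rw [lineP_mul, lineP_X, Polynomial.eval_mul, hp, _root_.map_mul]; simp

lemma lineP_deriv {n : ℕ} (x u : Fin n → ℝ) (p : MvPolynomial (Fin n) ℝ) :
    (lineP x u p).derivative = ∑ j, Polynomial.C (u j) * lineP x u (pderiv j p) := by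
  induction p using MvPolynomial.induction_on with
  | C a => simp [lineP_C, lineP]
  | add p q hp hq =>
    simp only [lineP_add, map_add, hp, hq, mul_add, Finset.sum_add_distrib]
  | mul_X p j hp =>
    rw [lineP_mul, lineP_X, Polynomial.derivative_mul, hp]
    have h1 : ∀ i : Fin n, pderiv i (p * X j) = pderiv i p * X j + (if i = j then p else 0) := by
      intro i
      rw [pderiv_mul, pderiv_X]
      split <;> simp_all [Pi.single_apply]
    simp only [h1, lineP_add, lineP_mul, lineP_X, mul_add, Finset.sum_add_distrib,
      Finset.sum_mul, apply_ite (lineP x u), map_zero, mul_ite, mul_zero,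
      Finset.sum_ite_eq', Finset.mem_univ, if_true]
    simp [Finset.sum_ite_eq', show lineP x u (0 : MvPolynomial (Fin n) ℝ) = 0 from map_zero _]
    rw [mul_comm (Polynomial.C (u j)) (lineP x u p)]
    simp [mul_assoc]

lemma PNN_mul {g h : Polynomial ℝ} (hg : ∀ k, 0 ≤ g.coeff k) (hh : ∀ k, 0 ≤ h.coeff k) :
    ∀ k, 0 ≤ (g * h).coeff k := by
  intro k
  rw [Polynomial.coeff_mul]
  exact Finset.sum_nonneg fun p _ => mul_nonneg (hg _) (hh _)

lemma PNN_pow {g : Polynomial ℝ} (hg : ∀ k, 0 ≤ g.coeff k) (m : ℕ) :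
    ∀ k, 0 ≤ (g ^ m).coeff k := by
  induction m with
  | zero => intro k; rw [pow_zero, Polynomial.coeff_one]; split <;> norm_num
  | succ m ih => rw [pow_succ]; exact PNN_mul ih hg

lemma PNN_lineP {n : ℕ} {x u : Fin n → ℝ} (hx : 0 ≤ x) (hu : 0 ≤ u)
    (p : MvPolynomial (Fin n) ℝ) (hp : ∀ m, 0 ≤ coeff m p) :
    ∀ k, 0 ≤ (lineP x u p).coeff k := by
  intro k
  rw [p.as_sum, lineP, map_sum, Polynomial.finset_sum_coeff]
  refine Finset.sum_nonneg fun m _ => ?_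
  rw [aeval_monomial]
  revert k
  refine PNN_mul (fun k => ?_) ?_
  · rw [Polynomial.algebraMap_eq, Polynomial.coeff_C]
    split
    · exact hp m
    · exact le_refl 0
  · refine Finset.prod_induction _ (fun g : Polynomial ℝ => ∀ k, 0 ≤ g.coeff k)
      (fun a b ha hb => PNN_mul ha hb) (fun k => by rw [Polynomial.coeff_one]; split <;> norm_num) ?_
    intro j _
    refine PNN_pow (fun k => ?_) _
    rw [Polynomial.coeff_add, Polynomial.coeff_C, Polynomial.coeff_C_mul, Polynomial.coeff_X]
    have := hx j; have := hu j
    split_ifs <;> simp_all <;> positivity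

lemma mvTaylor {n : ℕ} (p : MvPolynomial (Fin n) ℝ) (hp : ∀ m, 0 ≤ coeff m p)
    {x y : Fin n → ℝ} (hx : 0 ≤ x) (hxy : x ≤ y) :
    2 * (eval y p - eval x p) ≤
      ∑ j, (eval x (pderiv j p) + eval y (pderiv j p)) * (y j - x j) := by
  set u : Fin n → ℝ := y - x with hu_def
  have hu : 0 ≤ u := fun j => by simp [hu_def]; exact hxy j
  have key := scalarTaylor (lineP x u p) (PNN_lineP hx hu p hp)
  rw [lineP_eval, lineP_eval, lineP_deriv] at key
  have e0 : (fun j => x j + u j * 0) = x := by funext j; simp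
  have e1 : (fun j => x j + u j * 1) = y := by funext j; simp [hu_def]
  rw [e0, e1] at key
  rw [Polynomial.eval_finset_sum, Polynomial.eval_finset_sum] at key
  simp only [Polynomial.eval_mul, Polynomial.eval_C, lineP_eval, e0, e1] at key
  rw [← Finset.sum_add_distrib] at key
  refine key.trans (le_of_eq (Finset.sum_congr rfl fun j _ => ?_))
  have : u j = y j - x j := by simp [hu_def]
  rw [this]; ring

lemma mulVecApply {nn : ℕ} (A : Matrix (Fin nn) (Fin nn) ℝ) (v : Fin nn → ℝ) (i : Fin nn) :
    (A *ᵥ v) i = ∑ j, A i j * v j := by simp [Matrix.mulVec, dotProduct]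

lemma mulVecNonneg {nn : ℕ} {A : Matrix (Fin nn) (Fin nn) ℝ} (hA : ∀ i j, 0 ≤ A i j)
    {v : Fin nn → ℝ} (hv : 0 ≤ v) : 0 ≤ A *ᵥ v := by
  intro i
  rw [Pi.zero_apply, mulVecApply]
  exact Finset.sum_nonneg fun j _ => mul_nonneg (hA i j) (hv j)

lemma mulVecMono {nn : ℕ} {A : Matrix (Fin nn) (Fin nn) ℝ} (hA : ∀ i j, 0 ≤ A i j)
    {v w : Fin nn → ℝ} (hvw : v ≤ w) : A *ᵥ v ≤ A *ᵥ w := by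
  intro i
  rw [mulVecApply, mulVecApply]
  exact Finset.sum_le_sum fun j _ => mul_le_mul_of_nonneg_left (hvw j) (hA i j)

lemma mulVecMonoMat {nn : ℕ} {A A' : Matrix (Fin nn) (Fin nn) ℝ} (h : ∀ i j, A i j ≤ A' i j)
    {v : Fin nn → ℝ} (hv : 0 ≤ v) : A *ᵥ v ≤ A' *ᵥ v := by
  intro i
  rw [mulVecApply, mulVecApply]
  exact Finset.sum_le_sum fun j _ => mul_le_mul_of_nonneg_right (h i j) (hv j)

lemma powNonneg {nn : ℕ} {A : Matrix (Fin nn) (Fin nn) ℝ} (hA : ∀ i j, 0 ≤ A i j) (m : ℕ) :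
    ∀ i j, 0 ≤ (A ^ m) i j := by
  induction m with
  | zero => intro i j; rw [pow_zero]; by_cases h : i = j <;> simp [Matrix.one_apply, h]
  | succ m ih =>
    intro i j
    rw [pow_succ, Matrix.mul_apply]
    exact Finset.sum_nonneg fun l _ => mul_nonneg (ih i l) (hA l j)

lemma invNonnegApply {nn : ℕ} (A : Matrix (Fin nn) (Fin nn) ℝ)
    (hA : ∀ i j, 0 ≤ A i j) (d : Fin nn → ℝ) (hd : ∀ j, 0 < d j)
    (hAd : A *ᵥ d ≤ d) (hu : IsUnit (1 - A))
    (g : Fin nn → ℝ) (hg : 0 ≤ g) : 0 ≤ (1 - A)⁻¹ *ᵥ g := by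
  set B := (1 - A)⁻¹ with hB
  have hdet : IsUnit (1 - A).det := (Matrix.isUnit_iff_isUnit_det _).mp hu
  have hBA : B * (1 - A) = 1 := Matrix.nonsing_inv_mul _ hdet
  -- bound g by c • d
  set c : ℝ := ∑ j, |g j| / d j with hc_def
  have hc : ∀ j, g j ≤ c * d j := by
    intro j
    have h1 : |g j| / d j ≤ c :=
      Finset.single_le_sum (f := fun i => |g i| / d i)
        (fun i _ => div_nonneg (abs_nonneg _) (hd i).le) (Finset.mem_univ j)
    have h2 : (|g j| / d j) * d j ≤ c * d j :=
      mul_le_mul_of_nonneg_right h1 (hd j).le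
    rw [div_mul_cancel₀ _ (hd j).ne'] at h2
    exact le_trans (le_abs_self _) h2
  -- powers applied to d stay ≤ d
  have hpow_d : ∀ m, (A ^ m) *ᵥ d ≤ d := by
    intro m
    induction m with
    | zero => rw [pow_zero, Matrix.one_mulVec]
    | succ m ih =>
      rw [pow_succ, ← Matrix.mulVec_mulVec]
      exact le_trans (mulVecMono (powNonneg hA m) hAd) ih
  have hgcd : g ≤ c • d := fun j => by simpa using hc j
  have hAmg_ub : ∀ m, (A ^ m) *ᵥ g ≤ c • d := by
    intro m
    refine le_trans (mulVecMono (powNonneg hA m) hgcd) ?_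
    rw [Matrix.mulVec_smul]
    intro j
    simp only [Pi.smul_apply, smul_eq_mul]
    rcases le_or_gt 0 c with h | h
    · exact mul_le_mul_of_nonneg_left (hpow_d m j) h
    · exfalso
      have : 0 ≤ c := Finset.sum_nonneg fun i _ => div_nonneg (abs_nonneg _) (hd i).le
      linarith
  have hAmg_nonneg : ∀ m, 0 ≤ (A ^ m) *ᵥ g := fun m => mulVecNonneg (powNonneg hA m) hg
  set s : ℕ → Fin nn → ℝ := fun m => (∑ k ∈ Finset.range m, A ^ k) *ᵥ g with hs
  have hs_succ : ∀ m, s (m + 1) = s m + (A ^ m) *ᵥ g := by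
    intro m
    show (∑ k ∈ Finset.range (m+1), A ^ k) *ᵥ g = _
    rw [Finset.sum_range_succ, Matrix.add_mulVec]
  have hs_mono : Monotone s := by
    refine monotone_nat_of_le_succ fun m => ?_
    rw [hs_succ]
    intro j
    have h := hAmg_nonneg m j
    rw [Pi.zero_apply] at h
    simp only [Pi.add_apply]
    linarith
  have hgeom : ∀ m, (1 - A) * (∑ k ∈ Finset.range m, A ^ k) = 1 - A ^ m := by
    intro m
    have key : A * (∑ k ∈ Finset.range m, A ^ k) = (∑ k ∈ Finset.range m, A ^ k) * A := by
      rw [Finset.mul_sum, Finset.sum_mul]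
      exact Finset.sum_congr rfl fun k _ => ((Commute.refl A).pow_right k).eq
    rw [sub_mul, one_mul, key]
    have h2 : (∑ k ∈ Finset.range m, A ^ k) * A - (∑ k ∈ Finset.range m, A ^ k)
        = A ^ m - 1 := by
      rw [← geom_sum_mul A m, mul_sub, mul_one]
    have h3 := congrArg Neg.neg h2
    simp only [neg_sub] at h3
    exact h3
  have hs_eq : ∀ m, s m = B *ᵥ g - B *ᵥ ((A ^ m) *ᵥ g) := by
    intro m
    have hSm : (∑ k ∈ Finset.range m, A ^ k) = B * (1 - A ^ m) := by
      calc (∑ k ∈ Finset.range m, A ^ k) = 1 * (∑ k ∈ Finset.range m, A ^ k) := (one_mul _).symm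
        _ = (B * (1 - A)) * (∑ k ∈ Finset.range m, A ^ k) := by rw [hBA]
        _ = B * ((1 - A) * (∑ k ∈ Finset.range m, A ^ k)) := Matrix.mul_assoc _ _ _
        _ = B * (1 - A ^ m) := by rw [hgeom]
    show (∑ k ∈ Finset.range m, A ^ k) *ᵥ g = _
    rw [hSm, Matrix.mul_sub, Matrix.mul_one, Matrix.sub_mulVec, Matrix.mulVec_mulVec,
      ← Matrix.mulVec_mulVec]
  have hbdd : ∀ i, BddAbove (Set.range fun m => s m i) := by
    intro i
    refine ⟨(B *ᵥ g) i + ∑ j, |B i j| * (c * d j), ?_⟩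
    rintro _ ⟨m, rfl⟩
    show s m i ≤ (B *ᵥ g) i + ∑ j, |B i j| * (c * d j)
    rw [hs_eq m]
    simp only [Pi.sub_apply]
    have habs : |(B *ᵥ ((A ^ m) *ᵥ g)) i| ≤ ∑ j, |B i j| * (c * d j) := by
      rw [mulVecApply]
      refine le_trans (Finset.abs_sum_le_sum_abs _ _) (Finset.sum_le_sum fun j _ => ?_)
      rw [abs_mul]
      refine mul_le_mul_of_nonneg_left ?_ (abs_nonneg _)
      rw [abs_of_nonneg (hAmg_nonneg m j)]
      have := hAmg_ub m j
      simpa using this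
    have := neg_abs_le ((B *ᵥ ((A ^ m) *ᵥ g)) i)
    linarith
  have hconv : ∀ i, Tendsto (fun m => s m i) atTop (nhds (⨆ m, s m i)) :=
    fun i => tendsto_atTop_ciSup (fun a b hab => hs_mono hab i) (hbdd i)
  have hAmg_tend : ∀ j, Tendsto (fun m => ((A ^ m) *ᵥ g) j) atTop (nhds 0) := by
    intro j
    have h1 : Tendsto (fun m => s (m + 1) j) atTop (nhds (⨆ m, s m j)) :=
      (hconv j).comp (tendsto_add_atTop_nat 1)
    have h2 := h1.sub (hconv j)
    rw [sub_self] at h2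
    refine h2.congr fun m => ?_
    rw [hs_succ m]
    simp
  intro i
  rw [Pi.zero_apply]
  have hBAmg : Tendsto (fun m => (B *ᵥ ((A ^ m) *ᵥ g)) i) atTop (nhds 0) := by
    have heq : ∀ m, (B *ᵥ ((A ^ m) *ᵥ g)) i = ∑ j, B i j * ((A ^ m) *ᵥ g) j :=
      fun m => mulVecApply _ _ _
    simp only [heq]
    have := tendsto_finset_sum (f := fun j m => B i j * ((A ^ m) *ᵥ g) j)
      (a := fun j => (0:ℝ)) Finset.univ
      (fun j _ => by simpa using (hAmg_tend j).const_mul (B i j))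
    simpa using this
  have hlim : Tendsto (fun m => s m i) atTop (nhds ((B *ᵥ g) i)) := by
    have heq : ∀ m, s m i = (B *ᵥ g) i - (B *ᵥ ((A ^ m) *ᵥ g)) i := by
      intro m; rw [hs_eq m]; simp
    simp only [heq]
    simpa using (tendsto_const_nhds (x := (B *ᵥ g) i)).sub hBAmg
  refine ge_of_tendsto' hlim fun m => ?_
  have hm0 : s 0 i ≤ s m i := hs_mono (Nat.zero_le m) i
  have h0 : s 0 i = 0 := by
    show ((∑ k ∈ Finset.range 0, A ^ k) *ᵥ g) i = 0
    simp [Matrix.zero_mulVec]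
  linarith

/-- a cone vector yields the error bound μf − ν⁽ᵏ⁾ ≤ 2⁻ᵏ λmax d. -/
theorem newton_error_cone_vector {n : ℕ} (F : Fin n → MvPolynomial (Fin n) ℝ)
    (hF : mspNonneg F)
    (μ : Fin n → ℝ)
    (hμ0 : 0 ≤ μ) (hfix : mspEval F μ = μ)
    (hleast : ∀ y : Fin n → ℝ, 0 ≤ y → mspEval F y = y → μ ≤ y)
    -- the Newton sequence is well-defined:
    (hwd : ∀ k, IsUnit (1 - mspJac F (newtonSeq F k)))
    -- the Newton sequence is monotonically increasing with
    -- ν⁽ᵏ⁾ ≤ f(ν⁽ᵏ⁾) ≤ ν⁽ᵏ⁺¹⁾ ≺ μf: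
    (hmono : ∀ k, newtonSeq F k ≤ mspEval F (newtonSeq F k) ∧
      mspEval F (newtonSeq F k) ≤ newtonSeq F (k + 1) ∧
      ∀ j, newtonSeq F k j < μ j)
    -- d is a cone vector:
    (d : Fin n → ℝ) (hd : ∀ j, 0 < d j) (hcone : mspJac F μ *ᵥ d ≤ d)
    -- λmax is the maximum of the ratios (μf)_i / d_i:
    (lmax : ℝ) (hlmax : ∀ j, μ j / d j ≤ lmax) (hlmax' : ∃ j, μ j / d j = lmax) :
    ∀ k : ℕ, ∀ j, μ j - newtonSeq F k j ≤ (1 / 2 : ℝ) ^ k * lmax * d j := by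
  have hlmax0 : 0 ≤ lmax := by
    obtain ⟨j, hj⟩ := hlmax'
    rw [← hj]
    exact div_nonneg (hμ0 j) (hd j).le
  have hν0 : ∀ k, (0 : Fin n → ℝ) ≤ newtonSeq F k := by
    intro k
    induction k with
    | zero => exact le_refl 0
    | succ k ih => exact le_trans ih (le_trans (hmono k).1 (hmono k).2.1)
  intro k
  induction k with
  | zero =>
    intro j
    have h0 : newtonSeq F 0 j = 0 := rfl
    rw [h0, pow_zero, one_mul, sub_zero]
    have := hlmax j
    rw [div_le_iff₀ (hd j)] at this
    exact this
  | succ k ih =>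
    set ν : Fin n → ℝ := newtonSeq F k with hν_def
    set A : Matrix (Fin n) (Fin n) ℝ := mspJac F ν with hA_def
    set B : Matrix (Fin n) (Fin n) ℝ := (1 - A)⁻¹ with hB_def
    set J : Matrix (Fin n) (Fin n) ℝ := mspJac F μ with hJ_def
    set lam : ℝ := (1 / 2 : ℝ) ^ k * lmax with hlam_def
    have hν : (0 : Fin n → ℝ) ≤ ν := hν0 k
    have hνμ : ν ≤ μ := fun j => ((hmono k).2.2 j).le
    have hAnn : ∀ i j, 0 ≤ A i j := fun i j =>
      evalNonneg _ (pderivNonneg _ (hF i) j) hν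
    have hAJ : ∀ i j, A i j ≤ J i j := fun i j =>
      evalMono _ (pderivNonneg _ (hF i) j) hν hνμ
    have hAd : A *ᵥ d ≤ d :=
      le_trans (mulVecMonoMat hAJ (fun j => (hd j).le)) hcone
    have hu : IsUnit (1 - A) := hwd k
    have hdet : IsUnit (1 - A).det := (Matrix.isUnit_iff_isUnit_det _).mp hu
    have hBinv : B * (1 - A) = 1 := Matrix.nonsing_inv_mul _ hdet
    have hB1 : ∀ w : Fin n → ℝ, B *ᵥ ((1 - A) *ᵥ w) = w := by
      intro w
      rw [Matrix.mulVec_mulVec, hBinv, Matrix.one_mulVec]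
    have hlam0 : 0 ≤ lam := by positivity
    -- key identity
    have hnew : newtonSeq F (k + 1) = ν + B *ᵥ (mspEval F ν - ν) := rfl
    have hid : μ - newtonSeq F (k + 1)
        = B *ᵥ (μ - mspEval F ν - A *ᵥ (μ - ν)) := by
      have inner : μ - mspEval F ν - A *ᵥ (μ - ν)
          = (1 - A) *ᵥ (μ - ν) - (mspEval F ν - ν) := by
        rw [Matrix.sub_mulVec, Matrix.one_mulVec]
        funext j
        simp only [Pi.sub_apply]
        ring
      rw [hnew, inner, Matrix.mulVec_sub B ((1 - A) *ᵥ (μ - ν)) (mspEval F ν - ν), hB1]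
      funext j
      simp only [Pi.sub_apply, Pi.add_apply]
      ring
    set g : Fin n → ℝ :=
      (lam / 2) • ((1 - A) *ᵥ d) - (μ - mspEval F ν - A *ᵥ (μ - ν)) with hg_def
    have hg : 0 ≤ g := by
      intro i
      rw [Pi.zero_apply]
      have hgi : g i = (lam / 2) * (d i - (A *ᵥ d) i)
          - (μ i - mspEval F ν i - (A *ᵥ (μ - ν)) i) := by
        rw [hg_def]
        simp only [Pi.sub_apply, Pi.smul_apply, smul_eq_mul, Matrix.sub_mulVec,
          Matrix.one_mulVec]
      rw [hgi]
      have hAij : ∀ i' j, A i' j = eval ν (pderiv j (F i')) := fun _ _ => rfl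
      have hJij : ∀ i' j, J i' j = eval μ (pderiv j (F i')) := fun _ _ => rfl
      have taylor := mvTaylor (F i) (hF i) hν hνμ
      have hfi : eval μ (F i) = μ i := congrFun hfix i
      rw [hfi] at taylor
      have hsplit : ∑ j, (eval ν (pderiv j (F i)) + eval μ (pderiv j (F i))) * (μ j - ν j)
          = (∑ j, A i j * (μ j - ν j)) + ∑ j, J i j * (μ j - ν j) := by
        rw [← Finset.sum_add_distrib]
        refine Finset.sum_congr rfl fun j _ => ?_
        rw [hAij, hJij]; ring
      rw [hsplit] at taylor
      have hmva : (A *ᵥ (μ - ν)) i = ∑ j, A i j * (μ j - ν j) := by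
        rw [mulVecApply]
        exact Finset.sum_congr rfl fun j _ => by simp
      have hmvd : (A *ᵥ d) i = ∑ j, A i j * d j := mulVecApply _ _ _
      have hJd : ∑ j, J i j * d j ≤ d i := by
        have := hcone i
        rw [mulVecApply] at this
        exact this
      have hdiff : (∑ j, J i j * (μ j - ν j)) - (∑ j, A i j * (μ j - ν j))
          ≤ lam * (∑ j, J i j * d j) - lam * (∑ j, A i j * d j) := by
        rw [← Finset.sum_sub_distrib, Finset.mul_sum, Finset.mul_sum,
          ← Finset.sum_sub_distrib]
        refine Finset.sum_le_sum fun j _ => ?_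
        have h1 : μ j - ν j ≤ lam * d j := ih j
        have h2 : 0 ≤ J i j - A i j := sub_nonneg.mpr (hAJ i j)
        nlinarith [mul_le_mul_of_nonneg_left h1 h2]
      have hJd' : lam * (∑ j, J i j * d j) ≤ lam * d i :=
        mul_le_mul_of_nonneg_left hJd hlam0
      rw [hmva, hmvd]
      have hms : mspEval F ν i = eval ν (F i) := rfl
      rw [hms]
      linarith
    have hfin : (lam / 2) • d - (μ - newtonSeq F (k + 1)) = B *ᵥ g := by
      rw [hg_def, Matrix.mulVec_sub, Matrix.mulVec_smul, hB1, ← hid]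
    have hpos := invNonnegApply A hAnn d hd hAd hu g hg
    rw [← hB_def] at hpos
    rw [← hfin] at hpos
    intro j
    have h3 := hpos j
    simp only [Pi.sub_apply, Pi.smul_apply, smul_eq_mul, Pi.zero_apply] at h3
    have hpow : (1 / 2 : ℝ) ^ (k + 1) * lmax = lam / 2 := by
      rw [hlam_def, pow_succ]
      ring
    rw [hpow]
    linarith
end

section
/- Let f be a clean feasible termination MSP of a probabilistic pushdown automaton with n variables, and let cmin be its smallest nonzero coefficient. Then every component of the least fixed point μf is at least cmin^(2^{n+1} − 1). -/
/-- Evaluation of a quadratic system given by coefficients: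
f_i(x) = Σ_{j,k} b i j k · x_j · x_k + Σ_j l i j · x_j + c i. -/
noncomputable def qEval {n : ℕ} (b : Fin n → Fin n → Fin n → ℝ)
    (l : Fin n → Fin n → ℝ) (c : Fin n → ℝ) (x : Fin n → ℝ) : Fin n → ℝ :=
  fun i => (∑ j, ∑ k, b i j k * x j * x k) + (∑ j, l i j * x j) + c i

/-- lower bound on the least fixed point of a termination MSP
of a pPDA: every component of μf is at least cmin^(2^{n+1} − 1). -/
theorem termination_msp_mu_lower_bound {n : ℕ}
    (b : Fin n → Fin n → Fin n → ℝ) (l : Fin n → Fin n → ℝ) (c : Fin n → ℝ)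
    -- all coefficients are nonnegative:
    (hb : ∀ i j k, 0 ≤ b i j k) (hl : ∀ i j, 0 ≤ l i j) (hc : ∀ i, 0 ≤ c i)
    -- the coefficients of each equation sum to at most 1 (probabilities):
    (hsum : ∀ i, (∑ j, ∑ k, b i j k) + (∑ j, l i j) + c i ≤ 1)
    -- the MSP is clean (every variable productive):
    (hclean : ∀ i, ∃ k : ℕ, 0 < (qEval b l c)^[k] 0 i)
    -- μ is the least fixed point:
    (μ : Fin n → ℝ)
    (hμ0 : 0 ≤ μ) (hfix : qEval b l c μ = μ)
    (hleast : ∀ y : Fin n → ℝ, 0 ≤ y → qEval b l c y = y → μ ≤ y)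
    -- cmin is the smallest nonzero coefficient:
    (cmin : ℝ) (hcmin_pos : 0 < cmin)
    (hcminb : ∀ i j k, b i j k ≠ 0 → cmin ≤ b i j k)
    (hcminl : ∀ i j, l i j ≠ 0 → cmin ≤ l i j)
    (hcminc : ∀ i, c i ≠ 0 → cmin ≤ c i)
    (hcmin' : (∃ i j k, b i j k = cmin) ∨ (∃ i j, l i j = cmin) ∨ (∃ i, c i = cmin)) :
    ∀ i, cmin ^ (2 ^ (n + 1) - 1) ≤ μ i := by
  classical
  set g := qEval b l c with hg
  -- nonnegativity of the three parts of g x i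
  have hA : ∀ x : Fin n → ℝ, 0 ≤ x → ∀ i, 0 ≤ ∑ j, ∑ k, b i j k * x j * x k := by
    intro x hx i
    apply Finset.sum_nonneg; intro j _
    apply Finset.sum_nonneg; intro k _
    exact mul_nonneg (mul_nonneg (hb i j k) (hx j)) (hx k)
  have hB : ∀ x : Fin n → ℝ, 0 ≤ x → ∀ i, 0 ≤ ∑ j, l i j * x j := by
    intro x hx i
    exact Finset.sum_nonneg fun j _ => mul_nonneg (hl i j) (hx j)
  have hgnn : ∀ x : Fin n → ℝ, 0 ≤ x → 0 ≤ g x := by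
    intro x hx i
    have h1 := hA x hx i
    have h2 := hB x hx i
    have h3 := hc i
    simp only [hg, qEval, Pi.zero_apply]
    linarith
  -- lower bounds on g x i by each term
  have hgeb : ∀ x : Fin n → ℝ, 0 ≤ x → ∀ i j k, b i j k * x j * x k ≤ g x i := by
    intro x hx i j k
    have h1 : b i j k * x j * x k ≤ ∑ k', b i j k' * x j * x k' :=
      Finset.single_le_sum
        (fun k' _ => mul_nonneg (mul_nonneg (hb i j k') (hx j)) (hx k')) (Finset.mem_univ k)
    have h2 : (∑ k', b i j k' * x j * x k') ≤ ∑ j', ∑ k', b i j' k' * x j' * x k' :=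
      Finset.single_le_sum
        (fun j' _ => Finset.sum_nonneg fun k' _ =>
          mul_nonneg (mul_nonneg (hb i j' k') (hx j')) (hx k')) (Finset.mem_univ j)
    have h3 := hB x hx i
    have h4 := hc i
    simp only [hg, qEval]
    linarith
  have hgel : ∀ x : Fin n → ℝ, 0 ≤ x → ∀ i j, l i j * x j ≤ g x i := by
    intro x hx i j
    have h1 : l i j * x j ≤ ∑ j', l i j' * x j' :=
      Finset.single_le_sum (fun j' _ => mul_nonneg (hl i j') (hx j')) (Finset.mem_univ j)
    have h2 := hA x hx i
    have h3 := hc i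
    simp only [hg, qEval]
    linarith
  have hgec : ∀ x : Fin n → ℝ, 0 ≤ x → ∀ i, c i ≤ g x i := by
    intro x hx i
    have h1 := hA x hx i
    have h2 := hB x hx i
    simp only [hg, qEval]
    linarith
  -- case analysis of positivity
  have hcases : ∀ x : Fin n → ℝ, 0 ≤ x → ∀ i, 0 < g x i →
      (∃ j k, 0 < b i j k ∧ 0 < x j ∧ 0 < x k) ∨ (∃ j, 0 < l i j ∧ 0 < x j) ∨ 0 < c i := by
    intro x hx i hpos
    by_contra hcon
    push_neg at hcon
    obtain ⟨h1, h2, h3⟩ := hcon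
    have hA0 : (∑ j, ∑ k, b i j k * x j * x k) ≤ 0 := by
      apply Finset.sum_nonpos; intro j _
      apply Finset.sum_nonpos; intro k _
      rcases eq_or_lt_of_le (hb i j k) with hbe | hbp
      · rw [← hbe]; simp
      rcases eq_or_lt_of_le (hx j) with hxe | hxp
      · rw [← hxe]; simp
      have hk0 : x k = 0 := le_antisymm (h1 j k hbp hxp) (hx k)
      rw [hk0]; simp
    have hB0 : (∑ j, l i j * x j) ≤ 0 := by
      apply Finset.sum_nonpos; intro j _
      rcases eq_or_lt_of_le (hl i j) with hle' | hlp
      · rw [← hle']; simp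
      have hj0 : x j = 0 := le_antisymm (h2 j hlp) (hx j)
      rw [hj0]; simp
    have := hpos
    simp only [hg, qEval] at this
    linarith
  -- positivity is monotone in the positivity set
  have hposmono : ∀ x y : Fin n → ℝ, 0 ≤ x → 0 ≤ y → (∀ j, 0 < x j → 0 < y j) →
      ∀ i, 0 < g x i → 0 < g y i := by
    intro x y hx hy hxy i hpos
    rcases hcases x hx i hpos with ⟨j, k, hb', hxj, hxk⟩ | ⟨j, hl', hxj⟩ | hc'
    · exact lt_of_lt_of_le (mul_pos (mul_pos hb' (hxy j hxj)) (hxy k hxk)) (hgeb y hy i j k)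
    · exact lt_of_lt_of_le (mul_pos hl' (hxy j hxj)) (hgel y hy i j)
    · exact lt_of_lt_of_le hc' (hgec y hy i)
  -- monotonicity of g
  have hmono : ∀ x y : Fin n → ℝ, 0 ≤ x → x ≤ y → g x ≤ g y := by
    intro x y hx hxy i
    simp only [hg, qEval]
    have hAle : (∑ j, ∑ k, b i j k * x j * x k) ≤ ∑ j, ∑ k, b i j k * y j * y k := by
      apply Finset.sum_le_sum; intro j _
      apply Finset.sum_le_sum; intro k _
      have h1 : b i j k * x j ≤ b i j k * y j :=
        mul_le_mul_of_nonneg_left (hxy j) (hb i j k)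
      exact mul_le_mul h1 (hxy k) (hx k) (mul_nonneg (hb i j k) ((hx j).trans (hxy j)))
    have hBle : (∑ j, l i j * x j) ≤ ∑ j, l i j * y j := by
      apply Finset.sum_le_sum; intro j _
      exact mul_le_mul_of_nonneg_left (hxy j) (hl i j)
    linarith
  -- iterates
  have hxknn : ∀ k : ℕ, 0 ≤ g^[k] (0 : Fin n → ℝ) := by
    intro k
    induction k with
    | zero => simp
    | succ k ih =>
      rw [Function.iterate_succ_apply']
      exact hgnn _ ih
  have hchain : ∀ k : ℕ, g^[k] (0 : Fin n → ℝ) ≤ g^[k+1] 0 := by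
    intro k
    induction k with
    | zero => simpa using hgnn 0 le_rfl
    | succ k ih =>
      rw [Function.iterate_succ_apply', Function.iterate_succ_apply']
      exact hmono _ _ (hxknn k) ih
  have hle : ∀ k m : ℕ, k ≤ m → g^[k] (0 : Fin n → ℝ) ≤ g^[m] 0 := by
    intro k m hkm
    induction m, hkm using Nat.le_induction with
    | base => exact le_rfl
    | succ m hm ih => exact le_trans ih (hchain m)
  have hμge : ∀ k : ℕ, g^[k] (0 : Fin n → ℝ) ≤ μ := by
    intro k
    induction k with
    | zero => simpa using hμ0
    | succ k ih =>
      rw [Function.iterate_succ_apply']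
      calc g (g^[k] 0) ≤ g μ := hmono _ _ (hxknn k) ih
        _ = μ := hfix
  -- cmin ≤ 1
  have hAc : ∀ i, (0:ℝ) ≤ ∑ j, ∑ k, b i j k :=
    fun i => Finset.sum_nonneg fun j _ => Finset.sum_nonneg fun k _ => hb i j k
  have hBc : ∀ i, (0:ℝ) ≤ ∑ j, l i j :=
    fun i => Finset.sum_nonneg fun j _ => hl i j
  have hcmin1 : cmin ≤ 1 := by
    rcases hcmin' with ⟨i, j, k, h⟩ | ⟨i, j, h⟩ | ⟨i, h⟩
    · have h1 : b i j k ≤ ∑ k', b i j k' :=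
        Finset.single_le_sum (fun k' _ => hb i j k') (Finset.mem_univ k)
      have h2 : (∑ k', b i j k') ≤ ∑ j', ∑ k', b i j' k' :=
        Finset.single_le_sum (fun j' _ => Finset.sum_nonneg fun k' _ => hb i j' k')
          (Finset.mem_univ j)
      have := hsum i
      have := hBc i
      have := hc i
      linarith
    · have h1 : l i j ≤ ∑ j', l i j' :=
        Finset.single_le_sum (fun j' _ => hl i j') (Finset.mem_univ j)
      have := hsum i
      have := hAc i
      have := hc i
      linarith
    · have := hsum i
      have := hAc i
      have := hBc i
      linarith
  -- quantitative lower bound on positive components of iterates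
  have hquant : ∀ k : ℕ, ∀ i, 0 < g^[k] (0 : Fin n → ℝ) i → cmin ^ (2 ^ k - 1) ≤ g^[k] 0 i := by
    intro k
    induction k with
    | zero => intro i h; simp at h
    | succ k ih =>
      intro i h
      rw [Function.iterate_succ_apply'] at h ⊢
      have hxnn := hxknn k
      have h2k : 1 ≤ 2 ^ k := Nat.one_le_pow _ _ (by norm_num)
      have h2s : 2 ^ (k+1) = 2 * 2 ^ k := by rw [pow_succ]; ring
      have hpe : (0:ℝ) ≤ cmin ^ (2 ^ k - 1) := pow_nonneg hcmin_pos.le _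
      rcases hcases _ hxnn i h with ⟨j, k', hb', hxj, hxk⟩ | ⟨j, hl', hxj⟩ | hc'
      · have hexp : 2 ^ (k+1) - 1 = 1 + (2 ^ k - 1) + (2 ^ k - 1) := by omega
        have hbge := hcminb i j k' hb'.ne'
        have hxjge := ih j hxj
        have hxkge := ih k' hxk
        have hmain : cmin ^ 1 * cmin ^ (2 ^ k - 1) * cmin ^ (2 ^ k - 1)
            ≤ b i j k' * g^[k] 0 j * g^[k] 0 k' := by
          apply mul_le_mul _ hxkge hpe (mul_nonneg (hb i j k') (hxnn j))
          exact mul_le_mul (by simpa using hbge) hxjge hpe (hb i j k')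
        rw [hexp, pow_add, pow_add]
        exact le_trans hmain (hgeb _ hxnn i j k')
      · have hexp : 1 + (2 ^ k - 1) ≤ 2 ^ (k+1) - 1 := by omega
        have h1 : cmin ^ (2 ^ (k+1) - 1) ≤ cmin ^ (1 + (2 ^ k - 1)) :=
          pow_le_pow_of_le_one hcmin_pos.le hcmin1 hexp
        have hlge := hcminl i j hl'.ne'
        have hxjge := ih j hxj
        have hmain : cmin ^ (1 + (2 ^ k - 1)) ≤ l i j * g^[k] 0 j := by
          rw [pow_add]
          exact mul_le_mul (by simpa using hlge) hxjge hpe (hl i j)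
        exact le_trans h1 (le_trans hmain (hgel _ hxnn i j))
      · have hexp : 1 ≤ 2 ^ (k+1) - 1 := by omega
        have h1 : cmin ^ (2 ^ (k+1) - 1) ≤ cmin ^ 1 :=
          pow_le_pow_of_le_one hcmin_pos.le hcmin1 hexp
        have h2 : cmin ≤ c i := hcminc i hc'.ne'
        calc cmin ^ (2 ^ (k+1) - 1) ≤ cmin ^ 1 := h1
          _ = cmin := pow_one cmin
          _ ≤ c i := h2
          _ ≤ g (g^[k] 0) i := hgec _ hxnn i
  -- all components of the n-th iterate are positive
  have hfull : ∀ i, 0 < g^[n] (0 : Fin n → ℝ) i := by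
    set S : ℕ → Finset (Fin n) := fun k => Finset.univ.filter (fun i => 0 < g^[k] 0 i) with hS
    have hmem : ∀ k i, i ∈ S k ↔ 0 < g^[k] (0 : Fin n → ℝ) i := by
      intro k i; simp [hS]
    have hSsub : ∀ k m, k ≤ m → S k ⊆ S m := by
      intro k m hkm i hi
      rw [hmem] at hi ⊢
      exact lt_of_lt_of_le hi (hle k m hkm i)
    have hstep : ∀ k, S k = S (k+1) → ∀ m, k ≤ m → S m = S k := by
      intro k hk m hm
      induction m, hm using Nat.le_induction with
      | base => rfl
      | succ m hm ih =>
        have hiff : ∀ j, 0 < g^[m] (0 : Fin n → ℝ) j ↔ 0 < g^[k] 0 j := by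
          intro j; rw [← hmem, ← hmem, ih]
        have h1 : ∀ i, 0 < g^[m+1] (0 : Fin n → ℝ) i → 0 < g^[k+1] 0 i := by
          intro i hi
          rw [Function.iterate_succ_apply'] at hi ⊢
          exact hposmono _ _ (hxknn m) (hxknn k) (fun j hj => (hiff j).mp hj) i hi
        have h2 : ∀ i, 0 < g^[k+1] (0 : Fin n → ℝ) i → 0 < g^[m+1] 0 i := by
          intro i hi
          rw [Function.iterate_succ_apply'] at hi ⊢
          exact hposmono _ _ (hxknn k) (hxknn m) (fun j hj => (hiff j).mpr hj) i hi
        calc S (m+1) = S (k+1) := by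
              ext i
              rw [hmem, hmem]
              exact ⟨h1 i, h2 i⟩
          _ = S k := hk.symm
    have hex : ∃ k, k ≤ n ∧ S k = S (k+1) := by
      by_contra hcon
      push_neg at hcon
      have hcard : ∀ k, k ≤ n + 1 → k ≤ (S k).card := by
        intro k
        induction k with
        | zero => intro _; exact Nat.zero_le _
        | succ k ih =>
          intro hk
          have h1 := ih (by omega)
          have hss : S k ⊂ S (k+1) :=
            (hSsub k (k+1) (Nat.le_succ k)).ssubset_of_ne (hcon k (by omega))
          have := Finset.card_lt_card hss
          omega
      have h1 := hcard (n+1) le_rfl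
      have h2 : (S (n+1)).card ≤ n := by
        have := Finset.card_le_univ (S (n+1))
        simpa using this
      omega
    obtain ⟨k, hkn, hk⟩ := hex
    intro i
    obtain ⟨m, hm⟩ := hclean i
    have him : i ∈ S m := (hmem m i).mpr hm
    have hin : i ∈ S n := by
      rcases le_total m k with h | h
      · have hik : i ∈ S k := hSsub m k h him
        rw [hstep k hk n hkn]
        exact hik
      · rw [hstep k hk n hkn, ← hstep k hk m h]
        exact him
    exact (hmem n i).mp hin
  -- conclusion
  intro i
  have h1 := hquant n i (hfull i)
  have h2k : 1 ≤ 2 ^ n := Nat.one_le_pow _ _ (by norm_num)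
  have h2s : 2 ^ (n+1) = 2 * 2 ^ n := by rw [pow_succ]; ring
  have h2 : cmin ^ (2 ^ (n+1) - 1) ≤ cmin ^ (2 ^ n - 1) :=
    pow_le_pow_of_le_one hcmin_pos.le hcmin1 (by omega)
  exact le_trans (le_trans h2 h1) (hμge n i)
end

section
/- Let f be a strongly connected termination MSP with n variables whose coefficients are expressed as ratios of m-bit numbers. Then the convergence threshold k_f = n·log₂( μmax/(cmin·μmin·min{μmin,1}) ) satisfies k_f ≤ n·2^{n+2}·m. -/
/-- Direct dependence of variable i on variable j in the quadratic system. -/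
def qDep {n : ℕ} (b : Fin n → Fin n → Fin n → ℝ) (l : Fin n → Fin n → ℝ)
    (i j : Fin n) : Prop :=
  (∃ k, b i j k ≠ 0 ∨ b i k j ≠ 0) ∨ l i j ≠ 0

section Aux
variable {n : ℕ} {b : Fin n → Fin n → Fin n → ℝ} {l : Fin n → Fin n → ℝ} {c : Fin n → ℝ}

lemma qEval_mono (hb : ∀ i j k, 0 ≤ b i j k) (hl : ∀ i j, 0 ≤ l i j)
    {x y : Fin n → ℝ} (hx : 0 ≤ x) (hxy : x ≤ y) :
    qEval b l c x ≤ qEval b l c y := by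
  intro i
  unfold qEval
  gcongr with j _ k _ j _
  all_goals first
    | exact hb i j k | exact hl i j | exact hx _ | exact hxy _
    | exact mul_nonneg (hb i j k) (le_trans (hx j) (hxy j))

lemma const_le_qEval (hb : ∀ i j k, 0 ≤ b i j k) (hl : ∀ i j, 0 ≤ l i j)
    {x : Fin n → ℝ} (hx : 0 ≤ x) (i : Fin n) : c i ≤ qEval b l c x i := by
  unfold qEval
  have h1 : (0:ℝ) ≤ ∑ j, ∑ k, b i j k * x j * x k :=
    Finset.sum_nonneg fun j _ => Finset.sum_nonneg fun k _ =>
      mul_nonneg (mul_nonneg (hb i j k) (hx j)) (hx k)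
  have h2 : (0:ℝ) ≤ ∑ j, l i j * x j :=
    Finset.sum_nonneg fun j _ => mul_nonneg (hl i j) (hx j)
  linarith

lemma lin_le_qEval (hb : ∀ i j k, 0 ≤ b i j k) (hl : ∀ i j, 0 ≤ l i j)
    (hc : ∀ i, 0 ≤ c i) {x : Fin n → ℝ} (hx : 0 ≤ x) (i j : Fin n) :
    l i j * x j ≤ qEval b l c x i := by
  unfold qEval
  have h1 : (0:ℝ) ≤ ∑ j, ∑ k, b i j k * x j * x k :=
    Finset.sum_nonneg fun j _ => Finset.sum_nonneg fun k _ =>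
      mul_nonneg (mul_nonneg (hb i j k) (hx j)) (hx k)
  have h2 : l i j * x j ≤ ∑ j, l i j * x j :=
    Finset.single_le_sum (f := fun j => l i j * x j)
      (fun j _ => mul_nonneg (hl i j) (hx j)) (Finset.mem_univ j)
  have := hc i
  linarith

lemma quad_le_qEval (hb : ∀ i j k, 0 ≤ b i j k) (hl : ∀ i j, 0 ≤ l i j)
    (hc : ∀ i, 0 ≤ c i) {x : Fin n → ℝ} (hx : 0 ≤ x) (i j k : Fin n) :
    b i j k * x j * x k ≤ qEval b l c x i := by
  unfold qEval
  have h0 : ∀ j k, (0:ℝ) ≤ b i j k * x j * x k := fun j k =>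
    mul_nonneg (mul_nonneg (hb i j k) (hx j)) (hx k)
  have h1 : b i j k * x j * x k ≤ ∑ k, b i j k * x j * x k :=
    Finset.single_le_sum (f := fun k => b i j k * x j * x k)
      (fun k _ => h0 j k) (Finset.mem_univ k)
  have h2 : (∑ k, b i j k * x j * x k) ≤ ∑ j, ∑ k, b i j k * x j * x k :=
    Finset.single_le_sum (f := fun j => ∑ k, b i j k * x j * x k)
      (fun j _ => Finset.sum_nonneg fun k _ => h0 j k) (Finset.mem_univ j)
  have h3 : (0:ℝ) ≤ ∑ j, l i j * x j :=
    Finset.sum_nonneg fun j _ => mul_nonneg (hl i j) (hx j)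
  have := hc i
  linarith

lemma qEval_pos_iff (hb : ∀ i j k, 0 ≤ b i j k) (hl : ∀ i j, 0 ≤ l i j)
    (hc : ∀ i, 0 ≤ c i) {x : Fin n → ℝ} (hx : 0 ≤ x) (i : Fin n) :
    0 < qEval b l c x i ↔
      0 < c i ∨ (∃ j, 0 < l i j ∧ 0 < x j) ∨
        (∃ j k, 0 < b i j k ∧ 0 < x j ∧ 0 < x k) := by
  constructor
  · intro h
    by_contra hcon
    push_neg at hcon
    obtain ⟨h1, h2, h3⟩ := hcon
    have hc0 : c i = 0 := le_antisymm h1 (hc i)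
    have hB : (∑ j, ∑ k, b i j k * x j * x k) = 0 :=
      Finset.sum_eq_zero fun j _ => Finset.sum_eq_zero fun k _ => by
        rcases (hb i j k).eq_or_lt with hb0 | hb0
        · rw [← hb0]; ring
        rcases (hx j).eq_or_lt with hxj | hxj
        · rw [← hxj]; simp
        have hk : x k = 0 := le_antisymm (h3 j k hb0 hxj) (hx k)
        rw [hk]; ring
    have hL : (∑ j, l i j * x j) = 0 :=
      Finset.sum_eq_zero fun j _ => by
        rcases (hl i j).eq_or_lt with hl0 | hl0
        · rw [← hl0]; ring
        have hj : x j = 0 := le_antisymm (h2 j hl0) (hx j)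
        rw [hj]; ring
    unfold qEval at h
    rw [hB, hL, hc0] at h
    simp at h
  · rintro (h | ⟨j, hlj, hxj⟩ | ⟨j, k, hbj, hxj, hxk⟩)
    · exact lt_of_lt_of_le h (const_le_qEval hb hl hx i)
    · exact lt_of_lt_of_le (mul_pos hlj hxj) (lin_le_qEval hb hl hc hx i j)
    · exact lt_of_lt_of_le (mul_pos (mul_pos hbj hxj) hxk)
        (quad_le_qEval hb hl hc hx i j k)

end Aux

/-- for a strongly connected termination MSP with m-bit
coefficients, k_f = n·log₂(μmax/(cmin·μmin·min{μmin,1})) ≤ n·2^{n+2}·m. -/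
theorem termination_msp_threshold_bound {n m : ℕ} (hn : 0 < n)
    (b : Fin n → Fin n → Fin n → ℝ) (l : Fin n → Fin n → ℝ) (c : Fin n → ℝ)
    (hb : ∀ i j k, 0 ≤ b i j k) (hl : ∀ i j, 0 ≤ l i j) (hc : ∀ i, 0 ≤ c i)
    (hsum : ∀ i, (∑ j, ∑ k, b i j k) + (∑ j, l i j) + c i ≤ 1)
    (hclean : ∀ i, ∃ k : ℕ, 0 < (qEval b l c)^[k] 0 i)
    -- strongly connected:
    (hsc : ∀ i j, Relation.ReflTransGen (qDep b l) i j)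
    -- coefficients are ratios of m-bit integers:
    (hbits : ∀ x : ℝ,
      ((∃ i j k, b i j k = x) ∨ (∃ i j, l i j = x) ∨ (∃ i, c i = x)) →
      x = 0 ∨ ∃ p q : ℕ, 1 ≤ p ∧ p < 2 ^ m ∧ 1 ≤ q ∧ q < 2 ^ m ∧ x = (p : ℝ) / q)
    -- μ is the least fixed point:
    (μ : Fin n → ℝ)
    (hμ0 : 0 ≤ μ) (hfix : qEval b l c μ = μ)
    (hleast : ∀ y : Fin n → ℝ, 0 ≤ y → qEval b l c y = y → μ ≤ y)
    -- cmin is the smallest nonzero coefficient: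
    (cmin : ℝ) (hcmin_pos : 0 < cmin)
    (hcminb : ∀ i j k, b i j k ≠ 0 → cmin ≤ b i j k)
    (hcminl : ∀ i j, l i j ≠ 0 → cmin ≤ l i j)
    (hcminc : ∀ i, c i ≠ 0 → cmin ≤ c i)
    (hcmin' : (∃ i j k, b i j k = cmin) ∨ (∃ i j, l i j = cmin) ∨ (∃ i, c i = cmin))
    -- μmin and μmax are the minimal and maximal components of μ:
    (μmin μmax : ℝ)
    (hμmin : ∀ j, μmin ≤ μ j) (hμmin' : ∃ j, μ j = μmin)
    (hμmax : ∀ j, μ j ≤ μmax) (hμmax' : ∃ j, μ j = μmax) :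
    (n : ℝ) * Real.logb 2 (μmax / (cmin * μmin * min μmin 1))
      ≤ (n : ℝ) * 2 ^ (n + 2) * m := by
  -- the iterates
  set F := qEval b l c with hF
  set x : ℕ → Fin n → ℝ := fun t => F^[t] 0 with hxdef
  have hxsucc : ∀ t, x (t + 1) = F (x t) := fun t => Function.iterate_succ_apply' F t 0
  have hx0 : ∀ t, 0 ≤ x t := by
    intro t
    induction t with
    | zero => exact le_refl _
    | succ t ih =>
      rw [hxsucc]
      intro i
      exact le_trans (hc i) (const_le_qEval hb hl ih i)
  have hxmono1 : ∀ t, x t ≤ x (t + 1) := by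
    intro t
    induction t with
    | zero => exact hx0 1
    | succ t ih =>
      rw [hxsucc, hxsucc]
      exact qEval_mono hb hl (hx0 t) ih
  have hxmono : Monotone x := monotone_nat_of_le_succ hxmono1
  have hxμ : ∀ t, x t ≤ μ := by
    intro t
    induction t with
    | zero => exact hμ0
    | succ t ih =>
      rw [hxsucc]
      calc F (x t) ≤ F μ := qEval_mono hb hl (hx0 t) ih
        _ = μ := hfix
  -- an upper fixed point in [0,1]^n via Knaster–Tarski
  haveI : Fact ((0:ℝ) ≤ 1) := ⟨zero_le_one⟩
  have hF1 : ∀ u : Fin n → ℝ, 0 ≤ u → u ≤ 1 → ∀ i, F u i ≤ 1 := by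
    intro u hu hu1 i
    have h1 : F u i ≤ F 1 i := qEval_mono hb hl hu hu1 i
    have h2 : F 1 i ≤ 1 := by
      show qEval b l c 1 i ≤ 1
      unfold qEval
      simpa using hsum i
    exact le_trans h1 h2
  set G : (Fin n → Set.Icc (0:ℝ) 1) →o (Fin n → Set.Icc (0:ℝ) 1) :=
    ⟨fun u i => ⟨F (fun j => (u j : ℝ)) i,
      ⟨le_trans (hc i) (const_le_qEval hb hl (fun j => (u j).2.1) i),
       hF1 _ (fun j => (u j).2.1) (fun j => (u j).2.2) i⟩⟩,
     by
      intro u v huv i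
      exact Subtype.coe_le_coe.mp <|
        qEval_mono hb hl (fun j => (u j).2.1) (fun j => Subtype.coe_le_coe.2 (huv j)) i⟩
    with hG
  set z := OrderHom.lfp G with hzdef
  have hz : G z = z := OrderHom.map_lfp G
  set y : Fin n → ℝ := fun i => (z i : ℝ) with hydef
  have hy0 : (0 : Fin n → ℝ) ≤ y := fun i => (z i).2.1
  have hy1 : ∀ i, y i ≤ 1 := fun i => (z i).2.2
  have hyfix : qEval b l c y = y := by
    funext i
    exact congrArg Subtype.val (congrFun hz i)
  have hμy : μ ≤ y := hleast y hy0 hyfix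
  have hμ1 : ∀ i, μ i ≤ 1 := fun i => le_trans (hμy i) (hy1 i)
  -- cmin ≤ 1
  have hone : (0:Fin n → ℝ) ≤ 1 := fun _ => zero_le_one
  have hcmin1 : cmin ≤ 1 := by
    rcases hcmin' with ⟨i, j, k, h⟩ | ⟨i, j, h⟩ | ⟨i, h⟩
    · have := quad_le_qEval (c := c) hb hl hc hone i j k
      have h2 := hF1 1 hone (le_refl _) i
      rw [h] at this
      simp only [Pi.one_apply, mul_one] at this
      linarith
    · have := lin_le_qEval (c := c) hb hl hc hone i j
      have h2 := hF1 1 hone (le_refl _) i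
      rw [h] at this
      simp only [Pi.one_apply, mul_one] at this
      linarith
    · have := const_le_qEval (c := c) hb hl hone i
      have h2 := hF1 1 hone (le_refl _) i
      rw [h] at this
      linarith
  -- quantitative positivity of iterates
  have key : ∀ t i, 0 < x t i → cmin ^ (2 ^ t - 1) ≤ x t i := by
    intro t
    induction t with
    | zero =>
      intro i h
      rw [hxdef] at h
      simp at h
    | succ t ih =>
      intro i h
      rw [hxsucc] at h ⊢
      rw [qEval_pos_iff hb hl hc (hx0 t) i] at h
      have hexp1 : 1 ≤ 2 ^ t := Nat.one_le_two_pow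
      rcases h with h | ⟨j, hlj, hxj⟩ | ⟨j, k, hbj, hxj, hxk⟩
      · calc cmin ^ (2 ^ (t+1) - 1) ≤ cmin :=
              pow_le_of_le_one hcmin_pos.le hcmin1
                (by have h2 : 2 ^ (t+1) = 2 ^ t * 2 := pow_succ 2 t; omega)
          _ ≤ c i := hcminc i (by intro h0; rw [h0] at h; exact lt_irrefl _ h)
          _ ≤ F (x t) i := const_le_qEval hb hl (hx0 t) i
      · have h1 : cmin ^ (2 ^ (t+1) - 1) ≤ cmin ^ (2 ^ t) :=
          pow_le_pow_of_le_one hcmin_pos.le hcmin1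
            (by have h2 : 2 ^ (t+1) = 2 ^ t * 2 := pow_succ 2 t; omega)
        have h2 : cmin ^ (2 ^ t) = cmin * cmin ^ (2 ^ t - 1) := by
          rw [← pow_succ']
          congr 1
          omega
        have h3 : cmin * cmin ^ (2 ^ t - 1) ≤ l i j * x t j := by
          apply mul_le_mul (hcminl i j hlj.ne') (ih j hxj) (by positivity)
            (le_trans hcmin_pos.le (hcminl i j hlj.ne'))
        calc cmin ^ (2 ^ (t+1) - 1) ≤ cmin * cmin ^ (2 ^ t - 1) := by rw [← h2]; exact h1
          _ ≤ l i j * x t j := h3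
          _ ≤ F (x t) i := lin_le_qEval hb hl hc (hx0 t) i j
      · have h2 : cmin ^ (2 ^ (t+1) - 1)
            = cmin * cmin ^ (2 ^ t - 1) * cmin ^ (2 ^ t - 1) := by
          rw [← pow_succ', ← pow_add]
          congr 1
          have h2 : 2 ^ (t+1) = 2 ^ t * 2 := pow_succ 2 t
          omega
        have hble : cmin ≤ b i j k := hcminb i j k hbj.ne'
        have h3 : cmin * cmin ^ (2 ^ t - 1) * cmin ^ (2 ^ t - 1)
            ≤ b i j k * x t j * x t k := by
          apply mul_le_mul _ (ih k hxk) (by positivity)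
            (mul_nonneg (le_trans hcmin_pos.le hble) (hx0 t j))
          apply mul_le_mul hble (ih j hxj) (by positivity) (le_trans hcmin_pos.le hble)
        calc cmin ^ (2 ^ (t+1) - 1)
            = cmin * cmin ^ (2 ^ t - 1) * cmin ^ (2 ^ t - 1) := h2
          _ ≤ b i j k * x t j * x t k := h3
          _ ≤ F (x t) i := quad_le_qEval hb hl hc (hx0 t) i j k
  -- the positivity sets
  set S : ℕ → Set (Fin n) := fun t => {i | 0 < x t i} with hSdef
  have hSmono : ∀ s t, s ≤ t → S s ⊆ S t := by
    intro s t hst i hi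
    exact lt_of_lt_of_le hi (hxmono hst i)
  have hdet : ∀ s t, S s = S t → S (s + 1) = S (t + 1) := by
    intro s t h
    have hj : ∀ j, 0 < x s j ↔ 0 < x t j := fun j => Set.ext_iff.mp h j
    ext i
    simp only [hSdef, Set.mem_setOf_eq, hxsucc]
    rw [qEval_pos_iff hb hl hc (hx0 s) i, qEval_pos_iff hb hl hc (hx0 t) i]
    simp only [hj]
  have hstab : ∀ t, S t = S (t + 1) → ∀ k, S (t + k) = S t := by
    intro t h k
    induction k with
    | zero => rfl
    | succ k ih =>
      have := hdet (t + k) t ih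
      rw [show t + (k+1) = t + k + 1 from rfl, this, ← h]
  have hcard : ∀ t, t ≤ (S t).ncard ∨ S t = S (t + 1) := by
    intro t
    induction t with
    | zero => left; exact Nat.zero_le _
    | succ t ih =>
      rcases ih with h | h
      · by_cases he : S (t+1) = S (t+2)
        · right; exact he
        by_cases he' : S t = S (t+1)
        · exact absurd (hdet t (t+1) he') he
        · left
          have hsub : S t ⊂ S (t+1) := ssubset_of_subset_of_ne (hSmono t (t+1) (Nat.le_succ t)) he'
          have := Set.ncard_lt_ncard hsub (Set.toFinite _)
          omega
      · right
        exact hdet t (t+1) h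
  have hSn : S n = Set.univ := by
    rcases hcard n with h | h
    · refine Set.eq_of_subset_of_ncard_le (Set.subset_univ _) ?_
      rw [Set.ncard_univ]
      simpa [Nat.card_eq_fintype_card] using h
    · apply Set.eq_univ_of_forall
      intro i
      obtain ⟨k, hk⟩ := hclean i
      have hik : i ∈ S k := hk
      rcases le_or_gt k n with hkn | hkn
      · exact hSmono k n hkn hik
      · have hs := hstab n h (k - n)
        rw [show n + (k - n) = k from by omega] at hs
        rw [← hs]
        exact hik
  have hSnx : ∀ i, cmin ^ (2 ^ n - 1) ≤ μ i := by
    intro i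
    have hi : i ∈ S n := hSn ▸ Set.mem_univ i
    exact le_trans (key n i hi) (hxμ n i)
  obtain ⟨j0, hj0⟩ := hμmin'
  have hμminge : cmin ^ (2 ^ n - 1) ≤ μmin := hj0 ▸ hSnx j0
  have hμmin_pos : 0 < μmin := lt_of_lt_of_le (by positivity) hμminge
  have hμmin1 : μmin ≤ 1 := hj0 ▸ hμ1 j0
  obtain ⟨j1, hj1⟩ := hμmax'
  have hμmax1 : μmax ≤ 1 := hj1 ▸ hμ1 j1
  have hμmaxpos : 0 < μmax := lt_of_lt_of_le hμmin_pos (hj1 ▸ hμmin j1)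
  -- cmin is at least 2^(-m)
  rcases hbits cmin hcmin' with h0 | ⟨p, q, hp1, hp2, hq1, hq2, heq⟩
  · exact absurd h0 hcmin_pos.ne'
  have h2m : 1 / (2:ℝ) ^ m ≤ cmin := by
    rw [heq]
    have hq0 : (0:ℝ) < q := by exact_mod_cast hq1
    have hqle : (q:ℝ) ≤ 2 ^ m := by exact_mod_cast hq2.le
    calc 1 / (2:ℝ) ^ m ≤ 1 / q := one_div_le_one_div_of_le hq0 hqle
      _ ≤ p / q := by gcongr; exact_mod_cast hp1
  have hmin_eq : min μmin 1 = μmin := min_eq_left hμmin1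
  set E : ℕ := 2 ^ (n+1) - 1 with hE
  have hdenom : cmin ^ E ≤ cmin * μmin * μmin := by
    have hpe : cmin ^ E = cmin * cmin ^ (2 ^ n - 1) * cmin ^ (2 ^ n - 1) := by
      rw [← pow_succ', ← pow_add]
      congr 1
      have h1 : 1 ≤ 2 ^ n := Nat.one_le_two_pow
      have h2 : 2 ^ (n+1) = 2 ^ n * 2 := pow_succ 2 n
      omega
    rw [hpe]
    have h1 : cmin * cmin ^ (2 ^ n - 1) ≤ cmin * μmin :=
      mul_le_mul_of_nonneg_left hμminge hcmin_pos.le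
    exact mul_le_mul h1 hμminge (by positivity)
      (mul_nonneg hcmin_pos.le hμmin_pos.le)
  have hRle : μmax / (cmin * μmin * min μmin 1) ≤ (2:ℝ) ^ (m * E) := by
    rw [hmin_eq]
    have h1 : μmax / (cmin * μmin * μmin) ≤ 1 / cmin ^ E :=
      div_le_div₀ zero_le_one hμmax1 (pow_pos hcmin_pos E) hdenom
    have h2 : 1 / cmin ^ E ≤ (2:ℝ) ^ (m * E) := by
      rw [pow_mul]
      have h3 : (1 / (2:ℝ) ^ m) ^ E ≤ cmin ^ E :=
        pow_le_pow_left₀ (by positivity) h2m E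
      have h4 : (1 / (2:ℝ) ^ m) ^ E = 1 / ((2:ℝ) ^ m) ^ E := by
        rw [div_pow, one_pow]
      rw [h4] at h3
      rw [div_le_iff₀ (pow_pos hcmin_pos E)]
      have hpow : (0:ℝ) < ((2:ℝ) ^ m) ^ E := by positivity
      calc (1:ℝ) = ((2:ℝ) ^ m) ^ E * (1 / ((2:ℝ) ^ m) ^ E) := by field_simp
        _ ≤ ((2:ℝ) ^ m) ^ E * cmin ^ E := by
            exact mul_le_mul_of_nonneg_left h3 hpow.le
    exact le_trans h1 h2
  have hlogb : Real.logb 2 (μmax / (cmin * μmin * min μmin 1)) ≤ ((m * E : ℕ) : ℝ) := by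
    have hpos : 0 < μmax / (cmin * μmin * min μmin 1) := by
      rw [hmin_eq]; positivity
    have hle := (Real.logb_le_logb (b := 2) (by norm_num) hpos (by positivity)).mpr hRle
    calc Real.logb 2 (μmax / (cmin * μmin * min μmin 1))
        ≤ Real.logb 2 ((2:ℝ) ^ (m * E)) := hle
      _ = ((m * E : ℕ) : ℝ) := by
          rw [Real.logb_pow, Real.logb_self_eq_one (by norm_num)]
          push_cast
          ring
  have hEle : ((m * E : ℕ) : ℝ) ≤ 2 ^ (n + 2) * m := by
    have hEn : (E : ℝ) ≤ 2 ^ (n + 2) := by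
      have h1 : E ≤ 2 ^ (n + 2) := by
        calc E ≤ 2 ^ (n+1) := Nat.sub_le _ _
          _ ≤ 2 ^ (n+2) := Nat.pow_le_pow_right (by norm_num) (by omega)
      exact_mod_cast h1
    push_cast
    nlinarith [Nat.cast_nonneg (α := ℝ) m]
  have hfinal := le_trans hlogb hEle
  calc (n : ℝ) * Real.logb 2 (μmax / (cmin * μmin * min μmin 1))
      ≤ (n : ℝ) * (2 ^ (n + 2) * m) :=
        mul_le_mul_of_nonneg_left hfinal (Nat.cast_nonneg n)
    _ = (n : ℝ) * 2 ^ (n + 2) * m := by ring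
end

section
/- Let f be a strongly connected MSP and let x satisfy 0 ≤ x ≺ μf (strictly below the least fixed point in every component). Then the spectral radius of the Jacobian f'(x) is strictly less than 1; in particular the matrix Id − f'(x) is invertible and (Id − f'(x))^{−1} = Σ_{k≥0} f'(x)^k. -/
/-!
Below `μ` the Kleene iterates `0, f 0, f (f 0), …` produce a point `y ≥ x`, `y > 0`, with
`y ≤ f y ≠ y`. Since `f` has nonnegative coefficients it lies above its tangents, so
`f'(y) (μ - y) ≤ μ - f y ≤ μ - y`, strictly in some coordinate. Strong connectivity spreads this
defect to every coordinate: a vector `v > 0` with `f'(y) v < v` componentwise. As `f'(x) ≤ f'(y)`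
entrywise, also `f'(x) v < v`, i.e. `f'(x) v ≤ s v` for some `s < 1`. This bounds every eigenvalue
strictly inside the unit disc (Collatz–Wielandt) and makes `(f'(x)^k)ᵢⱼ ≤ s^k vᵢ / vⱼ`,
so the Neumann series converges to `(1 - f'(x))⁻¹`.
-/

open MvPolynomial Matrix

def mspClean {n : ℕ} (F : Fin n → MvPolynomial (Fin n) ℝ) : Prop :=
  ∀ i, ∃ k, 0 < kleeneSeq F k i

def mspDep {n : ℕ} (F : Fin n → MvPolynomial (Fin n) ℝ) (i k : Fin n) : Prop :=
  pderiv k (F i) ≠ 0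

def mspStronglyConnected {n : ℕ} (F : Fin n → MvPolynomial (Fin n) ℝ) : Prop :=
  ∀ i k, Relation.ReflTransGen (mspDep F) i k

/-- `l : ℂ` is an eigenvalue of the real matrix `A`. -/
def hasComplexEigenvalue {n : ℕ} (A : Matrix (Fin n) (Fin n) ℝ) (l : ℂ) : Prop :=
  ∃ v : Fin n → ℂ, v ≠ 0 ∧ (A.map (algebraMap ℝ ℂ)).mulVec v = l • v

open Filter Topology

namespace MvPolynomial

variable {σ : Type*} {p : MvPolynomial σ ℝ}

lemma eval_nonneg_of_coeff_nonneg (hp : ∀ m, 0 ≤ p.coeff m) {x : σ → ℝ} (hx : 0 ≤ x) :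
    0 ≤ eval x p := by
  rw [eval_eq]
  exact Finset.sum_nonneg fun m _ =>
    mul_nonneg (hp m) (Finset.prod_nonneg fun j _ => pow_nonneg (hx j) _)

lemma eval_pos_of_coeff_nonneg (hp : ∀ m, 0 ≤ p.coeff m) (hp0 : p ≠ 0) {x : σ → ℝ}
    (hx : ∀ i, 0 < x i) : 0 < eval x p := by
  rw [eval_eq]
  obtain ⟨m, hm⟩ := support_nonempty.2 hp0
  refine Finset.sum_pos' (fun m _ => mul_nonneg (hp m)
    (Finset.prod_nonneg fun j _ => pow_nonneg (hx j).le _)) ⟨m, hm, ?_⟩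
  exact mul_pos ((hp m).lt_of_ne' (mem_support_iff.1 hm))
    (Finset.prod_pos fun j _ => pow_pos (hx j) _)

lemma eval_mono_of_coeff_nonneg (hp : ∀ m, 0 ≤ p.coeff m) {a b : σ → ℝ} (ha : 0 ≤ a)
    (hab : a ≤ b) : eval a p ≤ eval b p := by
  rw [eval_eq, eval_eq]
  gcongr with m _ j _
  exacts [hp m, fun j _ => pow_nonneg (ha j) _, ha j, hab j]

lemma coeff_pderiv_nonneg (hp : ∀ m, 0 ≤ p.coeff m) (j : σ) (m : σ →₀ ℕ) :
    0 ≤ (pderiv j p).coeff m := by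
  rw [coeff_pderiv]
  exact mul_nonneg (hp _) (by positivity)

variable [Fintype σ]

lemma hasDerivAt_eval_add_smul (p : MvPolynomial σ ℝ) (a d : σ → ℝ) (t : ℝ) :
    HasDerivAt (fun t : ℝ => eval (a + t • d) p)
      (∑ j, d j * eval (a + t • d) (pderiv j p)) t := by
  classical
  induction p using MvPolynomial.induction_on with
  | C c => simpa using hasDerivAt_const t c
  | add p q hp hq => simpa [mul_add, Finset.sum_add_distrib] using hp.fun_add hq
  | mul_X p j hp =>
    have hX : HasDerivAt (fun t : ℝ => a j + t * d j) (d j) t := by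
      simpa using ((hasDerivAt_id t).mul_const (d j)).const_add (a j)
    simp only [map_mul, eval_X, Pi.add_apply, Pi.smul_apply, smul_eq_mul]
    refine (hp.fun_mul hX).congr_deriv ?_
    have hterm : ∀ i, d i * eval (a + t • d) (pderiv i (p * X j)) =
        d i * eval (a + t • d) (pderiv i p) * (a j + t * d j) +
          if j = i then eval (a + t • d) p * d j else 0 := by
      intro i
      simp only [Derivation.leibniz, pderiv_X, Pi.single_apply, smul_eq_mul, map_add, map_mul,
        eval_X, Pi.add_apply, Pi.smul_apply]
      split_ifs with h <;> simp only [h, map_one, map_zero, mul_one, mul_zero] <;> ring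
    simp only [hterm, Finset.sum_add_distrib, Finset.sum_ite_eq, Finset.mem_univ, if_true,
      Finset.sum_mul]

lemma eval_add_sum_pderiv_le (hp : ∀ m, 0 ≤ p.coeff m) {a b : σ → ℝ} (ha : 0 ≤ a)
    (hab : a ≤ b) : eval a p + ∑ j, eval a (pderiv j p) * (b j - a j) ≤ eval b p := by
  set g : ℝ → ℝ := fun t => eval (a + t • (b - a)) p
  have hg := hasDerivAt_eval_add_smul p a (b - a)
  obtain ⟨c, hc, hslope⟩ := exists_hasDerivAt_eq_slope g _ zero_lt_one
    (fun t _ => (hg t).continuousAt.continuousWithinAt) (fun t _ => hg t)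
  have hg0 : g 0 = eval a p := by simp [g]
  have hg1 : g 1 = eval b p := by simp [g]
  have hmono : ∑ j, eval a (pderiv j p) * (b j - a j) ≤
      ∑ j, (b - a) j * eval (a + c • (b - a)) (pderiv j p) := by
    refine Finset.sum_le_sum fun j _ => ?_
    rw [mul_comm]
    refine mul_le_mul_of_nonneg_left (eval_mono_of_coeff_nonneg (coeff_pderiv_nonneg hp j) ha ?_)
      (sub_nonneg.2 (hab j))
    exact le_add_of_nonneg_right (smul_nonneg hc.1.le (sub_nonneg.2 hab))
  rw [hslope, hg0, hg1, sub_zero, div_one] at hmono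
  linarith

end MvPolynomial

lemma exists_le_smul_of_lt {ι : Type*} [Finite ι] {u v : ι → ℝ} (hv : ∀ i, 0 < v i)
    (huv : ∀ i, u i < v i) : ∃ s : ℝ, 0 ≤ s ∧ s < 1 ∧ u ≤ s • v := by
  have : ∀ᶠ s in 𝓝[<] (1 : ℝ), 0 ≤ s ∧ s < 1 ∧ u ≤ s • v := by
    refine (eventually_nhdsWithin_of_eventually_nhds (eventually_ge_nhds zero_lt_one)).and
      (eventually_mem_nhdsWithin.and (eventually_all.2 fun i => ?_))
    filter_upwards [eventually_nhdsWithin_of_eventually_nhds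
      (eventually_ge_nhds ((div_lt_one (hv i)).2 (huv i)))] with s hs
    exact (div_le_iff₀ (hv i)).1 hs
  exact this.exists

lemma Summable.isUnit_one_sub {α : Type*} [Ring α] [TopologicalSpace α] [IsTopologicalRing α]
    [T2Space α] {x : α} (h : Summable (x ^ ·)) : IsUnit (1 - x) :=
  ⟨⟨1 - x, ∑' k, x ^ k, h.one_sub_mul_tsum_pow, h.tsum_pow_mul_one_sub⟩, rfl⟩

namespace Matrix

variable {ι : Type*} [Fintype ι] {A : Matrix ι ι ℝ}

lemma mulVec_nonneg (hA : ∀ i j, 0 ≤ A i j) {v : ι → ℝ} (hv : 0 ≤ v) : 0 ≤ A *ᵥ v :=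
  fun i => dotProduct_nonneg_of_nonneg (hA i) hv

lemma mulVec_mono (hA : ∀ i j, 0 ≤ A i j) {u v : ι → ℝ} (huv : u ≤ v) : A *ᵥ u ≤ A *ᵥ v :=
  fun i => dotProduct_le_dotProduct_of_nonneg_left huv (hA i)

lemma mulVec_le_mulVec_of_le {B : Matrix ι ι ℝ} (hAB : ∀ i j, A i j ≤ B i j) {v : ι → ℝ}
    (hv : 0 ≤ v) : A *ᵥ v ≤ B *ᵥ v :=
  fun i => dotProduct_le_dotProduct_of_nonneg_right (hAB i) hv

lemma apply_mul_le_mulVec (hA : ∀ i j, 0 ≤ A i j) {v : ι → ℝ} (hv : 0 ≤ v) (i j : ι) :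
    A i j * v j ≤ (A *ᵥ v) i :=
  Finset.single_le_sum (f := fun k => A i k * v k) (fun k _ => mul_nonneg (hA i k) (hv k))
    (Finset.mem_univ j)

lemma lt_one_of_le_mulVec (hA : ∀ i j, 0 ≤ A i j) {v : ι → ℝ} (hv : ∀ i, 0 < v i)
    (hAv : ∀ i, (A *ᵥ v) i < v i) {u : ι → ℝ} (hu : 0 ≤ u) (hu0 : u ≠ 0) {r : ℝ}
    (hAu : ∀ i, r * u i ≤ (A *ᵥ u) i) : r < 1 := by
  obtain ⟨j, hj⟩ : ∃ j, 0 < u j := by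
    by_contra! h
    exact hu0 (funext fun j => le_antisymm (h j) (hu j))
  obtain ⟨i, -, hi⟩ := Finset.exists_max_image Finset.univ (fun i => u i / v i) ⟨j, by simp⟩
  set t := u i / v i
  have hut : u ≤ t • v := fun k => (div_le_iff₀ (hv k)).1 (hi k (Finset.mem_univ k))
  have hui : u i = t * v i := (div_mul_cancel₀ _ (hv i).ne').symm
  have ht : 0 < t := (div_pos hj (hv j)).trans_le (hi j (Finset.mem_univ j))
  have : r * u i < u i := calc
    r * u i ≤ (A *ᵥ u) i := hAu i
    _ ≤ (A *ᵥ (t • v)) i := mulVec_mono hA hut i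
    _ = t * (A *ᵥ v) i := by rw [mulVec_smul, Pi.smul_apply, smul_eq_mul]
    _ < t * v i := mul_lt_mul_of_pos_left (hAv i) ht
    _ = u i := hui.symm
  exact (mul_lt_iff_lt_one_left (hui ▸ mul_pos ht (hv i))).1 this

lemma norm_mul_le_mulVec_norm (hA : ∀ i j, 0 ≤ A i j) {w : ι → ℂ} {l : ℂ}
    (hw : A.map (algebraMap ℝ ℂ) *ᵥ w = l • w) (i : ι) :
    ‖l‖ * ‖w i‖ ≤ (A *ᵥ fun j => ‖w j‖) i := calc
  ‖l‖ * ‖w i‖ = ‖∑ j, (A i j : ℂ) * w j‖ := by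
    rw [← norm_mul, ← smul_eq_mul, ← Pi.smul_apply, ← hw]; rfl
  _ ≤ ∑ j, ‖(A i j : ℂ) * w j‖ := norm_sum_le _ _
  _ = (A *ᵥ fun j => ‖w j‖) i := by
    simp only [norm_mul, Complex.norm_real, Real.norm_of_nonneg (hA i _)]; rfl

variable [DecidableEq ι]

lemma pow_mulVec_le (hA : ∀ i j, 0 ≤ A i j) {v : ι → ℝ} {s : ℝ} (hs : 0 ≤ s)
    (hAv : A *ᵥ v ≤ s • v) (k : ℕ) : A ^ k *ᵥ v ≤ s ^ k • v := by
  induction k with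
  | zero => simp
  | succ k ih => calc
    A ^ (k + 1) *ᵥ v = A *ᵥ (A ^ k *ᵥ v) := by rw [pow_succ', mulVec_mulVec]
    _ ≤ A *ᵥ (s ^ k • v) := mulVec_mono hA ih
    _ = s ^ k • A *ᵥ v := mulVec_smul _ _ _
    _ ≤ s ^ k • s • v := smul_le_smul_of_nonneg_left hAv (pow_nonneg hs k)
    _ = s ^ (k + 1) • v := by rw [smul_smul, pow_succ]

lemma summable_pow_of_mulVec_lt (hA : ∀ i j, 0 ≤ A i j) {v : ι → ℝ} (hv : ∀ i, 0 < v i)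
    (hAv : ∀ i, (A *ᵥ v) i < v i) : Summable (A ^ ·) := by
  obtain ⟨s, hs0, hs1, hAs⟩ := exists_le_smul_of_lt hv hAv
  refine Pi.summable.2 fun i => Pi.summable.2 fun j => ?_
  refine Summable.of_nonneg_of_le (fun k => pow_apply_nonneg hA k i j) (fun k => ?_)
    ((summable_geometric_of_lt_one hs0 hs1).mul_left (v i / v j))
  rw [div_mul_eq_mul_div, le_div_iff₀ (hv j)]
  calc (A ^ k) i j * v j ≤ (A ^ k *ᵥ v) i :=
        apply_mul_le_mulVec (pow_apply_nonneg hA k) (fun j => (hv j).le) i j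
    _ ≤ s ^ k * v i := pow_mulVec_le hA hs0 hAs k i
    _ = v i * s ^ k := mul_comm _ _

lemma exists_pow_apply_pos {R : ι → ι → Prop} (hA : ∀ i j, 0 ≤ A i j)
    (hR : ∀ i j, R i j → 0 < A i j) {i j : ι} (hij : Relation.ReflTransGen R i j) :
    ∃ k, 0 < (A ^ k) i j := by
  induction hij with
  | refl => exact ⟨0, by simp⟩
  | @tail b c _ hbc ih =>
    obtain ⟨k, hk⟩ := ih
    refine ⟨k + 1, ?_⟩
    rw [pow_succ, mul_apply]
    exact Finset.sum_pos' (fun l _ => mul_nonneg (pow_apply_nonneg hA k i l) (hA l c))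
      ⟨b, Finset.mem_univ b, mul_pos hk (hR b c hbc)⟩

lemma exists_pos_mulVec_lt {R : ι → ι → Prop} (hA : ∀ i j, 0 ≤ A i j)
    (hR : ∀ i j, R i j → 0 < A i j) (hconn : ∀ i j, Relation.ReflTransGen R i j)
    {w : ι → ℝ} (hw : 0 ≤ w) (hAw : A *ᵥ w ≤ w) (hne : A *ᵥ w ≠ w) :
    ∃ v : ι → ℝ, (∀ i, 0 < v i) ∧ ∀ i, (A *ᵥ v) i < v i := by
  set u := w - A *ᵥ w
  have hu : 0 ≤ u := sub_nonneg.2 hAw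
  obtain ⟨j, hj⟩ : ∃ j, 0 < u j := by
    by_contra! h
    exact hne (le_antisymm hAw fun j => sub_nonpos.1 (h j))
  choose k hk using fun i => exists_pow_apply_pos hA hR (hconn i j)
  -- `P` commutes with `A`, so `v := P w` has `v - A v = P u`, positive once `P` contains
  -- a path from every index to `j`.
  set P := ∑ m ∈ Finset.range (Finset.univ.sup k + 1), A ^ m with hPdef
  have hP : ∀ i l, 0 ≤ P i l := fun i l => by
    rw [hPdef, Matrix.sum_apply]; exact Finset.sum_nonneg fun m _ => pow_apply_nonneg hA m i l
  have hPu : ∀ i, 0 < (P *ᵥ u) i := fun i => calc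
    0 < (A ^ k i) i j * u j := mul_pos (hk i) hj
    _ ≤ P i j * u j := by
      refine mul_le_mul_of_nonneg_right ?_ (hu j)
      rw [hPdef, Matrix.sum_apply]
      exact Finset.single_le_sum (f := fun m => (A ^ m) i j)
        (fun m _ => pow_apply_nonneg hA m i j)
        (Finset.mem_range_succ_iff.2 (Finset.le_sup (Finset.mem_univ i)))
    _ ≤ (P *ᵥ u) i := apply_mul_le_mulVec hP hu i j
  have hcomm : A * P = P * A := Commute.sum_right _ _ _ fun m _ => Commute.self_pow A m
  have hsub : P *ᵥ w - A *ᵥ (P *ᵥ w) = P *ᵥ u := by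
    rw [mulVec_mulVec, hcomm, ← mulVec_mulVec, mulVec_sub]
  have hlt : ∀ i, (A *ᵥ (P *ᵥ w)) i < (P *ᵥ w) i := fun i =>
    sub_pos.1 (by rw [← Pi.sub_apply, hsub]; exact hPu i)
  exact ⟨P *ᵥ w, fun i => (mulVec_nonneg hA (mulVec_nonneg hP hw) i).trans_lt (hlt i), hlt⟩

lemma hasSum_pow_inv_one_sub {R : Type*} [CommRing R] [TopologicalSpace R] [IsTopologicalRing R]
    [T2Space R] {M : Matrix ι ι R} (h : Summable (M ^ ·)) :
    HasSum (M ^ ·) (1 - M)⁻¹ := by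
  rw [inv_eq_right_inv h.one_sub_mul_tsum_pow]
  exact h.hasSum

end Matrix

section MSP

variable {n : ℕ} {F : Fin n → MvPolynomial (Fin n) ℝ} {μ : Fin n → ℝ}

lemma continuous_mspEval (F : Fin n → MvPolynomial (Fin n) ℝ) : Continuous (mspEval F) :=
  continuous_pi fun i => continuous_eval (F i)

lemma mspEval_nonneg (hF : mspNonneg F) {x : Fin n → ℝ} (hx : 0 ≤ x) : 0 ≤ mspEval F x :=
  fun i => eval_nonneg_of_coeff_nonneg (hF i) hx

lemma mspEval_mono (hF : mspNonneg F) {a b : Fin n → ℝ} (ha : 0 ≤ a) (hab : a ≤ b) :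
    mspEval F a ≤ mspEval F b :=
  fun i => eval_mono_of_coeff_nonneg (hF i) ha hab

lemma kleeneSeq_succ (F : Fin n → MvPolynomial (Fin n) ℝ) (k : ℕ) :
    kleeneSeq F (k + 1) = mspEval F (kleeneSeq F k) :=
  Function.iterate_succ_apply' _ _ _

lemma kleeneSeq_nonneg (hF : mspNonneg F) (k : ℕ) : 0 ≤ kleeneSeq F k := by
  induction k with
  | zero => exact le_rfl
  | succ k ih => rw [kleeneSeq_succ]; exact mspEval_nonneg hF ih

lemma monotone_kleeneSeq (hF : mspNonneg F) : Monotone (kleeneSeq F) := by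
  refine monotone_nat_of_le_succ fun k => ?_
  induction k with
  | zero => exact kleeneSeq_nonneg hF 1
  | succ k ih =>
    simp only [kleeneSeq_succ] at ih ⊢
    exact mspEval_mono hF (kleeneSeq_nonneg hF k) ih

lemma kleeneSeq_le (hF : mspNonneg F) (hμ0 : 0 ≤ μ) (hfix : mspEval F μ = μ) (k : ℕ) :
    kleeneSeq F k ≤ μ := by
  induction k with
  | zero => exact hμ0
  | succ k ih => rw [kleeneSeq_succ, ← hfix]; exact mspEval_mono hF (kleeneSeq_nonneg hF k) ih

lemma tendsto_kleeneSeq (hF : mspNonneg F) (hμ0 : 0 ≤ μ) (hfix : mspEval F μ = μ)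
    (hleast : ∀ y : Fin n → ℝ, 0 ≤ y → mspEval F y = y → μ ≤ y) :
    Tendsto (kleeneSeq F) atTop (𝓝 μ) := by
  have hbdd : BddAbove (Set.range (kleeneSeq F)) :=
    ⟨μ, Set.forall_mem_range.2 (kleeneSeq_le hF hμ0 hfix)⟩
  have hlim := tendsto_atTop_ciSup (monotone_kleeneSeq hF) hbdd
  set L := ⨆ k, kleeneSeq F k
  have hfixL : mspEval F L = L := by
    refine tendsto_nhds_unique ?_ (hlim.comp (tendsto_add_atTop_nat 1))
    simpa only [Function.comp_def, kleeneSeq_succ] using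
      ((continuous_mspEval F).tendsto L).comp hlim
  have hLμ : L = μ := le_antisymm (ciSup_le (kleeneSeq_le hF hμ0 hfix))
    (hleast L ((kleeneSeq_nonneg hF 0).trans (le_ciSup hbdd 0)) hfixL)
  rwa [hLμ] at hlim

lemma exists_strict_postfixed_point_between [Nonempty (Fin n)] (hF : mspNonneg F) (hμ0 : 0 ≤ μ)
    (hfix : mspEval F μ = μ) (hleast : ∀ y : Fin n → ℝ, 0 ≤ y → mspEval F y = y → μ ≤ y)
    {x : Fin n → ℝ} (hx0 : 0 ≤ x) (hxμ : ∀ i, x i < μ i) :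
    ∃ y, x ≤ y ∧ (∀ i, 0 < y i) ∧ y ≤ μ ∧ y ≤ mspEval F y ∧ mspEval F y ≠ y := by
  choose z hxz hzμ using fun i => exists_between (hxμ i)
  have hz : ∀ i, 0 < z i := fun i => (hx0 i).trans_lt (hxz i)
  have hreach : ∃ k, z ≤ kleeneSeq F k :=
    (eventually_all.2 fun i => (tendsto_pi_nhds.1 (tendsto_kleeneSeq hF hμ0 hfix hleast) i)
      |>.eventually (eventually_ge_nhds (hzμ i))).exists
  obtain ⟨j, hj, hj1⟩ := Nat.exists_not_and_succ_of_not_zero_of_exists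
    (fun h => (hz (Classical.arbitrary _)).not_ge (h _)) hreach
  -- `j` is the last iterate not yet above `z`, so `y` lies strictly below `μ` somewhere.
  set y := z ⊔ kleeneSeq F j
  have hzy : z ≤ y := le_sup_left
  have hstep : kleeneSeq F (j + 1) ≤ mspEval F y := by
    rw [kleeneSeq_succ]
    exact mspEval_mono hF (kleeneSeq_nonneg hF j) le_sup_right
  have hyf : y ≤ mspEval F y :=
    sup_le (hj1.trans hstep) ((monotone_kleeneSeq hF j.le_succ).trans hstep)
  refine ⟨y, fun i => (hxz i).le.trans (hzy i), fun i => (hz i).trans_le (hzy i),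
    sup_le (fun i => (hzμ i).le) (kleeneSeq_le hF hμ0 hfix j), hyf, fun hfixy => ?_⟩
  have hμy := hleast y ((kleeneSeq_nonneg hF j).trans le_sup_right) hfixy
  exact hj fun i => ((lt_sup_iff.1 ((hzμ i).trans_le (hμy i))).resolve_left (lt_irrefl _)).le

lemma mspJac_nonneg (hF : mspNonneg F) {x : Fin n → ℝ} (hx : 0 ≤ x) (i j : Fin n) :
    0 ≤ mspJac F x i j :=
  eval_nonneg_of_coeff_nonneg (coeff_pderiv_nonneg (hF i) j) hx

lemma mspJac_mono (hF : mspNonneg F) {x y : Fin n → ℝ} (hx : 0 ≤ x) (hxy : x ≤ y)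
    (i j : Fin n) : mspJac F x i j ≤ mspJac F y i j :=
  eval_mono_of_coeff_nonneg (coeff_pderiv_nonneg (hF i) j) hx hxy

lemma mspJac_pos_of_mspDep (hF : mspNonneg F) {x : Fin n → ℝ} (hx : ∀ i, 0 < x i) {i j : Fin n}
    (h : mspDep F i j) : 0 < mspJac F x i j :=
  eval_pos_of_coeff_nonneg (coeff_pderiv_nonneg (hF i) j) h hx

lemma mspEval_add_mspJac_mulVec_le (hF : mspNonneg F) {a b : Fin n → ℝ} (ha : 0 ≤ a)
    (hab : a ≤ b) : mspEval F a + mspJac F a *ᵥ (b - a) ≤ mspEval F b :=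
  fun i => eval_add_sum_pderiv_le (hF i) ha hab

lemma exists_pos_mspJac_mulVec_lt (hF : mspNonneg F) (hsc : mspStronglyConnected F)
    (hμ0 : 0 ≤ μ) (hfix : mspEval F μ = μ)
    (hleast : ∀ y : Fin n → ℝ, 0 ≤ y → mspEval F y = y → μ ≤ y)
    {x : Fin n → ℝ} (hx0 : 0 ≤ x) (hxμ : ∀ i, x i < μ i) :
    ∃ v : Fin n → ℝ, (∀ i, 0 < v i) ∧ ∀ i, (mspJac F x *ᵥ v) i < v i := by
  cases isEmpty_or_nonempty (Fin n)
  · exact ⟨0, isEmptyElim, isEmptyElim⟩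
  obtain ⟨y, hxy, hy, hyμ, hyf, hfy⟩ :=
    exists_strict_postfixed_point_between hF hμ0 hfix hleast hx0 hxμ
  have hy0 : 0 ≤ y := fun i => (hy i).le
  have htaylor := mspEval_add_mspJac_mulVec_le hF hy0 hyμ
  rw [hfix] at htaylor
  have hMw : mspJac F y *ᵥ (μ - y) ≤ μ - y := fun i => by
    have h1 := htaylor i
    have h2 := hyf i
    rw [Pi.add_apply] at h1
    rw [Pi.sub_apply]
    linarith
  have hne : mspJac F y *ᵥ (μ - y) ≠ μ - y := fun h => hfy <| le_antisymm (fun i => by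
    have h1 := htaylor i
    rw [Pi.add_apply, h, Pi.sub_apply] at h1
    linarith) hyf
  obtain ⟨v, hv, hMv⟩ := exists_pos_mulVec_lt (mspJac_nonneg hF hy0)
    (fun i j => mspJac_pos_of_mspDep hF hy) hsc (sub_nonneg.2 hyμ) hMw hne
  exact ⟨v, hv, fun i =>
    (mulVec_le_mulVec_of_le (mspJac_mono hF hx0 hxy) (fun j => (hv j).le) i).trans_lt (hMv i)⟩

end MSP

theorem scMSP_jacobian_spectral_radius_lt_one_general {n : ℕ}
    (F : Fin n → MvPolynomial (Fin n) ℝ)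
    (hF : mspNonneg F) (hsc : mspStronglyConnected F)
    (μ : Fin n → ℝ)
    (hμ0 : 0 ≤ μ) (hfix : mspEval F μ = μ)
    (hleast : ∀ y : Fin n → ℝ, 0 ≤ y → mspEval F y = y → μ ≤ y)
    (x : Fin n → ℝ) (hx0 : 0 ≤ x) (hxμ : ∀ i, x i < μ i) :
    (∀ l : ℂ, hasComplexEigenvalue (mspJac F x) l → ‖l‖ < 1) ∧
    IsUnit (1 - mspJac F x) ∧
    HasSum (fun k : ℕ => mspJac F x ^ k) (1 - mspJac F x)⁻¹ := by
  obtain ⟨v, hv, hAv⟩ := exists_pos_mspJac_mulVec_lt hF hsc hμ0 hfix hleast hx0 hxμ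
  have hA := mspJac_nonneg hF hx0
  have hsum := summable_pow_of_mulVec_lt hA hv hAv
  refine ⟨fun l ⟨w, hw0, hw⟩ => ?_, hsum.isUnit_one_sub, hasSum_pow_inv_one_sub hsum⟩
  exact lt_one_of_le_mulVec hA hv hAv (fun i => norm_nonneg (w i))
    (fun h => hw0 (funext fun i => norm_eq_zero.1 (congrFun h i))) (norm_mul_le_mulVec_norm hA hw)

/-- for a strongly connected MSP and 0 ≤ x ≺ μf, the spectral
radius of f'(x) is < 1; hence Id − f'(x) is invertible and its inverse is the
Neumann series Σ f'(x)^k. -/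
theorem scMSP_jacobian_spectral_radius_lt_one {n : ℕ}
    (F : Fin n → MvPolynomial (Fin n) ℝ)
    (hF : mspNonneg F) (hclean : mspClean F) (hsc : mspStronglyConnected F)
    (μ : Fin n → ℝ)
    (hμ0 : 0 ≤ μ) (hfix : mspEval F μ = μ)
    (hleast : ∀ y : Fin n → ℝ, 0 ≤ y → mspEval F y = y → μ ≤ y)
    (x : Fin n → ℝ) (hx0 : 0 ≤ x) (hxμ : ∀ i, x i < μ i) :
    (∀ l : ℂ, hasComplexEigenvalue (mspJac F x) l → ‖l‖ < 1) ∧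
    IsUnit (1 - mspJac F x) ∧
    HasSum (fun k : ℕ => mspJac F x ^ k) (1 - mspJac F x)⁻¹ :=
  scMSP_jacobian_spectral_radius_lt_one_general F hF hsc μ hμ0 hfix hleast x hx0 hxμ
end
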